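/- arXiv:0802.3036 — 8 statements merged into one kernel-verified Lean document; each statement's English description precedes it below -/
import Mathlib

section
/- Let γ¹,γ²,γ³ > 0, l¹,l²,l³ > 0 and h¹_*,h²_*,h³_* ∈ ℝ. The quadratic form I_* is positive definite on E, i.e. I_*[φ] > 0 for every φ ∈ E with φ ≠ 0, if and only if one of the following conditions holds: (a) h¹_*, h²_* and h³_* are all positive; or (b) at most one of h¹_*, h²_*, h³_* is non-positive and γ¹(1 + l¹h¹_*) h²_* h³_* + γ²(1 + l²h²_*) h¹_* h³_* + γ³(1 + l³h³_*) h¹_* h²_* > 0. -/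
open MeasureTheory

/-!
By Cauchy–Schwarz, an arc of length `l` carrying `φ` with `φ(0) = a` has energy
`∫ (φ')² + h φ(l)² ≥ k a²`, `k = h / (1 + l h)`, with equality for an affine profile, as soon as
`1 + l h > 0`; testing a single linear arc shows that this is necessary. Since a function vanishing
at the junction but not identically has positive energy, positivity of `I_*` on `E` is then
equivalent to positivity of the diagonal form `Σ γⁱ kⁱ aⁱ²` on the plane `Σ γⁱ aⁱ = 0`. That form is
positive iff at most one `kⁱ` is non-positive and `γ⁰ k¹ k² + γ¹ k⁰ k² + γ² k⁰ k¹ > 0`, and this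
last quantity is the cubic of the statement divided by `Π (1 + lⁱ hⁱ)`.
-/

/-- Membership in the space `E`: each `φⁱ` is an `H¹(0,lⁱ)` function with weak derivative
`gⁱ ∈ L²(0,lⁱ)`, and the triple satisfies the junction constraint `Σ γⁱ φⁱ(0) = 0`. -/
def MemE (γ l : Fin 3 → ℝ) (φ g : Fin 3 → ℝ → ℝ) : Prop :=
  (∀ i, IntervalIntegrable (g i) volume 0 (l i)) ∧
  (∀ i, IntervalIntegrable (fun s => (g i s) ^ 2) volume 0 (l i)) ∧
  (∀ i, ∀ s ∈ Set.Icc (0 : ℝ) (l i), φ i s = φ i 0 + ∫ u in (0 : ℝ)..s, g i u) ∧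
  (∑ i, γ i * φ i 0 = 0)

/-- The quadratic form `I_*[φ] = Σ γⁱ ( ∫ (∂ₛφⁱ)² + hⁱ_* φⁱ(lⁱ)² )`,
where `gⁱ` denotes the derivative of `φⁱ`. -/
noncomputable def Istar (γ l h : Fin 3 → ℝ) (φ g : Fin 3 → ℝ → ℝ) : ℝ :=
  ∑ i, γ i * ((∫ s in (0 : ℝ)..(l i), (g i s) ^ 2) + h i * (φ i (l i)) ^ 2)

def IstarPosDef (γ l h : Fin 3 → ℝ) : Prop :=
  ∀ φ g : Fin 3 → ℝ → ℝ, MemE γ l φ g →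
    (∃ i, ∃ s ∈ Set.Icc (0 : ℝ) (l i), φ i s ≠ 0) → 0 < Istar γ l h φ g

theorem sq_intervalIntegral_le_mul {g : ℝ → ℝ} {a b : ℝ} (hab : a ≤ b)
    (hg : IntervalIntegrable g volume a b)
    (hg2 : IntervalIntegrable (fun s => g s ^ 2) volume a b) :
    (∫ s in a..b, g s) ^ 2 ≤ (b - a) * ∫ s in a..b, g s ^ 2 := by
  set G := ∫ s in a..b, g s
  have hvar : ∫ s in a..b, ((b - a) * g s - G) ^ 2
      = (b - a) * ((b - a) * (∫ s in a..b, g s ^ 2) - G ^ 2) := by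
    have hexp : ∀ s, ((b - a) * g s - G) ^ 2
        = (b - a) ^ 2 * g s ^ 2 - 2 * (b - a) * G * g s + G ^ 2 := fun s => by ring
    simp_rw [hexp]
    rw [intervalIntegral.integral_add ((hg2.const_mul _).sub (hg.const_mul _))
        intervalIntegrable_const, intervalIntegral.integral_sub (hg2.const_mul _) (hg.const_mul _),
      intervalIntegral.integral_const_mul, intervalIntegral.integral_const_mul,
      intervalIntegral.integral_const, smul_eq_mul]
    ring
  have hnonneg : 0 ≤ ∫ s in a..b, ((b - a) * g s - G) ^ 2 :=
    intervalIntegral.integral_nonneg hab fun s _ => sq_nonneg _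
  rcases hab.eq_or_lt with rfl | hlt
  · simp [G]
  · rw [hvar, mul_nonneg_iff_of_pos_left (sub_pos.2 hlt)] at hnonneg
    linarith

section Arc

variable {φ g : ℝ → ℝ} {L : ℝ}

theorem sq_sub_le_mul_integral_sq (hg : IntervalIntegrable g volume 0 L)
    (hg2 : IntervalIntegrable (fun s => g s ^ 2) volume 0 L)
    (hφ : ∀ s ∈ Set.Icc 0 L, φ s = φ 0 + ∫ u in (0 : ℝ)..s, g u) {s : ℝ} (hs : s ∈ Set.Icc 0 L) :
    (φ s - φ 0) ^ 2 ≤ s * ∫ u in (0 : ℝ)..s, g u ^ 2 := by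
  have hsub : Set.uIcc 0 s ⊆ Set.uIcc 0 L :=
    Set.uIcc_subset_uIcc_left (Set.mem_uIcc_of_le hs.1 hs.2)
  rw [hφ s hs, add_sub_cancel_left]
  simpa using sq_intervalIntegral_le_mul hs.1 (hg.mono_set hsub) (hg2.mono_set hsub)

theorem integral_sq_pos_of_ne_zero (hg : IntervalIntegrable g volume 0 L)
    (hg2 : IntervalIntegrable (fun s => g s ^ 2) volume 0 L)
    (hφ : ∀ s ∈ Set.Icc 0 L, φ s = φ 0 + ∫ u in (0 : ℝ)..s, g u) (hφ0 : φ 0 = 0) {s : ℝ}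
    (hs : s ∈ Set.Icc 0 L) (hφs : φ s ≠ 0) : 0 < ∫ u in (0 : ℝ)..L, g u ^ 2 := by
  have hs0 : 0 < s := hs.1.lt_of_ne fun h => hφs (h ▸ hφ0)
  have hcs := sq_sub_le_mul_integral_sq hg hg2 hφ hs
  rw [hφ0, sub_zero] at hcs
  have hpos : 0 < ∫ u in (0 : ℝ)..s, g u ^ 2 := by
    have : 0 < φ s ^ 2 := by positivity
    nlinarith
  exact hpos.trans_le <| intervalIntegral.integral_mono_interval le_rfl hs.1 hs.2
    (Filter.Eventually.of_forall fun u => sq_nonneg (g u)) hg2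

end Arc

theorem div_mul_sq_le_add_mul_sq {L h a b T : ℝ} (hL : 0 < L) (hP : 0 < 1 + L * h)
    (hab : (b - a) ^ 2 ≤ L * T) : h / (1 + L * h) * a ^ 2 ≤ T + h * b ^ 2 := by
  rw [div_mul_eq_mul_div, div_le_iff₀ hP]
  nlinarith [sq_nonneg ((1 + L * h) * b - a), mul_nonneg hP.le (sub_nonneg.2 hab)]

theorem add_mul_sq_pos {L h b T : ℝ} (hT : 0 < T) (hP : 0 < 1 + L * h) (hb : b ^ 2 ≤ L * T) :
    0 < T + h * b ^ 2 := by
  rcases le_or_gt 0 h with hh | hh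
  · positivity
  · nlinarith

theorem quadForm_pos_of_pivot {γ₀ γ₁ γ₂ k₀ k₁ k₂ a₀ a₁ a₂ : ℝ}
    (hγ₀ : 0 < γ₀) (hγ₁ : 0 < γ₁) (hγ₂ : 0 < γ₂) (hk₁ : 0 < k₁) (hk₂ : 0 < k₂)
    (hD : 0 < γ₀ * k₁ * k₂ + γ₁ * k₀ * k₂ + γ₂ * k₀ * k₁)
    (ha : γ₀ * a₀ + γ₁ * a₁ + γ₂ * a₂ = 0) (hne : a₀ ≠ 0 ∨ a₁ ≠ 0 ∨ a₂ ≠ 0) :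
    0 < γ₀ * k₀ * a₀ ^ 2 + γ₁ * k₁ * a₁ ^ 2 + γ₂ * k₂ * a₂ ^ 2 := by
  have hne₁₂ : a₁ ≠ 0 ∨ a₂ ≠ 0 := by
    by_contra! h
    obtain ⟨rfl, rfl⟩ := h
    have : a₀ = 0 := by simpa [hγ₀.ne'] using ha
    simp_all
  have hS : 0 < γ₁ * k₁ * a₁ ^ 2 + γ₂ * k₂ * a₂ ^ 2 := by
    rcases hne₁₂ with h | h
    · have := sq_nonneg a₂; positivity
    · have := sq_nonneg a₁; positivity
  rcases le_or_gt k₀ 0 with hk₀ | hk₀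
  · -- eliminate `a₀` through the constraint and apply Cauchy–Schwarz to the other two terms
    have key : γ₀ * k₁ * k₂ * (γ₀ * k₀ * a₀ ^ 2 + γ₁ * k₁ * a₁ ^ 2 + γ₂ * k₂ * a₂ ^ 2)
        = (γ₀ * k₁ * k₂ + γ₁ * k₀ * k₂ + γ₂ * k₀ * k₁) * (γ₁ * k₁ * a₁ ^ 2 + γ₂ * k₂ * a₂ ^ 2)
          - k₀ * γ₁ * γ₂ * (k₁ * a₁ - k₂ * a₂) ^ 2 := by
      linear_combination k₀ * k₁ * k₂ * (γ₀ * a₀ - γ₁ * a₁ - γ₂ * a₂) * ha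
    have hcorr : 0 ≤ -k₀ * γ₁ * γ₂ * (k₁ * a₁ - k₂ * a₂) ^ 2 := by
      have := neg_nonneg.2 hk₀; positivity
    have : 0 < γ₀ * k₁ * k₂ := by positivity
    refine pos_of_mul_pos_right (a := γ₀ * k₁ * k₂) ?_ this.le
    nlinarith [mul_pos hD hS]
  · nlinarith [mul_nonneg (mul_nonneg hγ₀.le hk₀.le) (sq_nonneg a₀)]

theorem pos_or_pos_of_quadForm_pos {γ₀ γ₁ k₀ k₁ : ℝ} (hγ₀ : 0 < γ₀) (hγ₁ : 0 < γ₁)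
    (h : 0 < γ₀ * k₀ * γ₁ ^ 2 + γ₁ * k₁ * γ₀ ^ 2) : 0 < k₀ ∨ 0 < k₁ := by
  by_contra! hk
  nlinarith [mul_nonneg (mul_nonneg hγ₀.le (sq_nonneg γ₁)) (neg_nonneg.2 hk.1),
    mul_nonneg (mul_nonneg hγ₁.le (sq_nonneg γ₀)) (neg_nonneg.2 hk.2)]

theorem pairwise_fin_three_iff {p : Fin 3 → Prop} :
    (∀ i j : Fin 3, i ≠ j → p i ∨ p j) ↔ (p 0 ∨ p 1) ∧ (p 0 ∨ p 2) ∧ (p 1 ∨ p 2) := by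
  refine ⟨fun H => ⟨H 0 1 (by decide), H 0 2 (by decide), H 1 2 (by decide)⟩, ?_⟩
  rintro ⟨h01, h02, h12⟩ i j hij
  fin_cases i <;> fin_cases j <;> first | exact absurd rfl hij | tauto

theorem pairwise_pos_and_pos_of_quadForm_pos {γ₀ γ₁ γ₂ k₀ k₁ k₂ : ℝ}
    (hγ₀ : 0 < γ₀) (hγ₁ : 0 < γ₁) (hγ₂ : 0 < γ₂)
    (hQ : ∀ a₀ a₁ a₂ : ℝ, γ₀ * a₀ + γ₁ * a₁ + γ₂ * a₂ = 0 → (a₀ ≠ 0 ∨ a₁ ≠ 0 ∨ a₂ ≠ 0) →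
      0 < γ₀ * k₀ * a₀ ^ 2 + γ₁ * k₁ * a₁ ^ 2 + γ₂ * k₂ * a₂ ^ 2) :
    ((0 < k₀ ∨ 0 < k₁) ∧ (0 < k₀ ∨ 0 < k₂) ∧ (0 < k₁ ∨ 0 < k₂)) ∧
      0 < γ₀ * k₁ * k₂ + γ₁ * k₀ * k₂ + γ₂ * k₀ * k₁ := by
  have hA : 0 < γ₀ * k₀ * γ₂ ^ 2 + γ₂ * k₂ * γ₀ ^ 2 := by
    simpa using hQ γ₂ 0 (-γ₀) (by ring) (Or.inl hγ₂.ne')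
  refine ⟨⟨?_, pos_or_pos_of_quadForm_pos hγ₀ hγ₂ hA, ?_⟩, ?_⟩
  · exact pos_or_pos_of_quadForm_pos hγ₀ hγ₁
      (by simpa using hQ γ₁ (-γ₀) 0 (by ring) (Or.inl hγ₁.ne'))
  · exact pos_or_pos_of_quadForm_pos hγ₁ hγ₂
      (by simpa using hQ 0 γ₂ (-γ₁) (by ring) (Or.inr (Or.inl hγ₂.ne')))
  · -- the test vector on which the form equals `γ₁ A D` with `A = γ₂ k₀ + γ₀ k₂ > 0`
    have hA' : 0 < γ₂ * k₀ + γ₀ * k₂ := by nlinarith [mul_pos hγ₀ hγ₂]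
    have hQD := hQ (γ₁ * k₂) (-(γ₂ * k₀ + γ₀ * k₂)) (γ₁ * k₀) (by ring)
      (Or.inr (Or.inl (neg_ne_zero.2 hA'.ne')))
    have key : γ₀ * k₀ * (γ₁ * k₂) ^ 2 + γ₁ * k₁ * (-(γ₂ * k₀ + γ₀ * k₂)) ^ 2
        + γ₂ * k₂ * (γ₁ * k₀) ^ 2
        = γ₁ * (γ₂ * k₀ + γ₀ * k₂) * (γ₀ * k₁ * k₂ + γ₁ * k₀ * k₂ + γ₂ * k₀ * k₁) := by
      ring
    rw [key] at hQD
    exact pos_of_mul_pos_right hQD (mul_pos hγ₁ hA').le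

theorem quadForm_pos_of_pairwise_pos {γ₀ γ₁ γ₂ k₀ k₁ k₂ a₀ a₁ a₂ : ℝ}
    (hγ₀ : 0 < γ₀) (hγ₁ : 0 < γ₁) (hγ₂ : 0 < γ₂)
    (hpair : (0 < k₀ ∨ 0 < k₁) ∧ (0 < k₀ ∨ 0 < k₂) ∧ (0 < k₁ ∨ 0 < k₂))
    (hD : 0 < γ₀ * k₁ * k₂ + γ₁ * k₀ * k₂ + γ₂ * k₀ * k₁)
    (ha : γ₀ * a₀ + γ₁ * a₁ + γ₂ * a₂ = 0) (hne : a₀ ≠ 0 ∨ a₁ ≠ 0 ∨ a₂ ≠ 0) :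
    0 < γ₀ * k₀ * a₀ ^ 2 + γ₁ * k₁ * a₁ ^ 2 + γ₂ * k₂ * a₂ ^ 2 := by
  obtain ⟨h01, h02, h12⟩ := hpair
  rcases le_or_gt k₀ 0 with hk₀ | hk₀
  · exact quadForm_pos_of_pivot hγ₀ hγ₁ hγ₂ (h01.resolve_left hk₀.not_gt)
      (h02.resolve_left hk₀.not_gt) hD ha hne
  rcases le_or_gt k₁ 0 with hk₁ | hk₁
  · have := quadForm_pos_of_pivot (k₀ := k₁) (a₀ := a₁) (a₁ := a₂) (a₂ := a₀) hγ₁ hγ₂ hγ₀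
      (h12.resolve_left hk₁.not_gt) hk₀ (by linarith) (by linarith) (by tauto)
    linarith
  · have := quadForm_pos_of_pivot (k₀ := k₂) (a₀ := a₂) (a₁ := a₀) (a₂ := a₁) hγ₂ hγ₀ hγ₁
      hk₀ hk₁ (by linarith) (by linarith) (by tauto)
    linarith

theorem sum_quadForm_pos_iff {γ k : Fin 3 → ℝ} (hγ : ∀ i, 0 < γ i) :
    (∀ a : Fin 3 → ℝ, ∑ i, γ i * a i = 0 → a ≠ 0 → 0 < ∑ i, γ i * k i * a i ^ 2) ↔
      (∀ i j : Fin 3, i ≠ j → 0 < k i ∨ 0 < k j) ∧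
        0 < γ 0 * k 1 * k 2 + γ 1 * k 0 * k 2 + γ 2 * k 0 * k 1 := by
  have hvec : ∀ a : Fin 3 → ℝ, a ≠ 0 ↔ a 0 ≠ 0 ∨ a 1 ≠ 0 ∨ a 2 ≠ 0 := fun a => by
    simp [Function.ne_iff, Fin.exists_fin_succ]
  simp only [Fin.sum_univ_three, pairwise_fin_three_iff, hvec]
  constructor
  · intro H
    refine pairwise_pos_and_pos_of_quadForm_pos (hγ 0) (hγ 1) (hγ 2) fun a₀ a₁ a₂ ha hne => ?_
    simpa using H ![a₀, a₁, a₂] (by simpa using ha) (by simpa using hne)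
  · rintro ⟨hpair, hD⟩ a ha hne
    exact quadForm_pos_of_pairwise_pos (hγ 0) (hγ 1) (hγ 2) hpair hD ha hne

theorem one_add_mul_pos_of_cubic_pos {γ₀ γ₁ γ₂ l₀ l₁ l₂ h₀ h₁ h₂ : ℝ}
    (hγ₀ : 0 < γ₀) (hγ₁ : 0 < γ₁) (hγ₂ : 0 < γ₂) (hl₀ : 0 < l₀) (hl₁ : 0 < l₁) (hl₂ : 0 < l₂)
    (hh₁ : 0 < h₁) (hh₂ : 0 < h₂)
    (hcubic : 0 < γ₀ * (1 + l₀ * h₀) * h₁ * h₂ + γ₁ * (1 + l₁ * h₁) * h₀ * h₂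
      + γ₂ * (1 + l₂ * h₂) * h₀ * h₁) :
    0 < 1 + l₀ * h₀ := by
  by_contra! hP
  have hh₀ : h₀ < 0 := by nlinarith
  have hP₁ : 0 < γ₁ * (1 + l₁ * h₁) * h₂ := by positivity
  have hP₂ : 0 < γ₂ * (1 + l₂ * h₂) * h₁ := by positivity
  nlinarith [mul_nonneg (mul_nonneg hγ₀.le (neg_nonneg.2 hP)) (mul_pos hh₁ hh₂).le,
    mul_pos hP₁ (neg_pos.2 hh₀), mul_pos hP₂ (neg_pos.2 hh₀)]

/-- The minimal energy `∫ (∂ₛψ)² + h ψ(l)²` over profiles `ψ` on `[0, l]` with `ψ(0) = 1`,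
attained by the affine `ψ(s) = 1 - h s / (1 + l h)`. -/
noncomputable def junctionCoeff (l h : Fin 3 → ℝ) (i : Fin 3) : ℝ := h i / (1 + l i * h i)

section Network

variable {γ l h : Fin 3 → ℝ}

theorem memE_affine {a : Fin 3 → ℝ} (c : Fin 3 → ℝ) (ha : ∑ i, γ i * a i = 0) :
    MemE γ l (fun i s => a i + c i * s) (fun i _ => c i) := by
  refine ⟨fun i => intervalIntegrable_const, fun i => intervalIntegrable_const, fun i s _ => ?_,
    by simpa using ha⟩
  simp [mul_comm]

theorem istar_affine (a c : Fin 3 → ℝ) :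
    Istar γ l h (fun i s => a i + c i * s) (fun i _ => c i)
      = ∑ i, γ i * (l i * c i ^ 2 + h i * (a i + c i * l i) ^ 2) := by
  simp [Istar]

theorem one_add_mul_pos_of_istarPosDef (hγ : ∀ i, 0 < γ i) (hl : ∀ i, 0 < l i)
    (H : IstarPosDef γ l h) (i : Fin 3) : 0 < 1 + l i * h i := by
  have hpos := H _ _ (memE_affine (Pi.single i 1) (a := 0) (by simp))
    ⟨i, l i, ⟨(hl i).le, le_rfl⟩, by simpa using (hl i).ne'⟩
  rw [istar_affine] at hpos
  simp only [Pi.single_apply, ite_pow, one_pow, ne_eq, OfNat.ofNat_ne_zero, not_false_eq_true,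
    zero_pow, mul_ite, mul_one, mul_zero, Pi.zero_apply, ite_mul, one_mul, zero_mul, zero_add,
    ite_add_ite, add_zero, Finset.sum_ite_eq', Finset.mem_univ, ↓reduceIte] at hpos
  nlinarith [mul_pos (hγ i) (hl i)]

theorem quadForm_pos_of_istarPosDef (hl : ∀ i, 0 < l i) (hP : ∀ i, 0 < 1 + l i * h i)
    (H : IstarPosDef γ l h) (a : Fin 3 → ℝ) (ha : ∑ i, γ i * a i = 0) (hne : a ≠ 0) :
    0 < ∑ i, γ i * junctionCoeff l h i * a i ^ 2 := by
  obtain ⟨i, hi⟩ := Function.ne_iff.1 hne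
  -- on each arc, the affine profile of minimal energy with junction value `a i`
  have hpos := H _ _ (memE_affine (fun i => -(a i * h i) / (1 + l i * h i)) ha)
    ⟨i, 0, ⟨le_rfl, (hl i).le⟩, by simpa using hi⟩
  rw [istar_affine] at hpos
  refine hpos.trans_eq (Finset.sum_congr rfl fun j _ => ?_)
  have := (hP j).ne'
  rw [junctionCoeff]
  field_simp
  ring

theorem istarPosDef_of_quadForm_pos (hγ : ∀ i, 0 < γ i) (hl : ∀ i, 0 < l i)
    (hP : ∀ i, 0 < 1 + l i * h i)
    (hQ : ∀ a : Fin 3 → ℝ, ∑ i, γ i * a i = 0 → a ≠ 0 →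
      0 < ∑ i, γ i * junctionCoeff l h i * a i ^ 2) :
    IstarPosDef γ l h := by
  rintro φ g ⟨hg, hg2, hφ, hsum⟩ ⟨i₀, s, hs, hφs⟩
  have hcs : ∀ i, (φ i (l i) - φ i 0) ^ 2 ≤ l i * ∫ u in (0 : ℝ)..(l i), g i u ^ 2 := fun i =>
    sq_sub_le_mul_integral_sq (hg i) (hg2 i) (hφ i) ⟨(hl i).le, le_rfl⟩
  have hbound : ∀ i, γ i * junctionCoeff l h i * φ i 0 ^ 2
      ≤ γ i * ((∫ u in (0 : ℝ)..(l i), g i u ^ 2) + h i * φ i (l i) ^ 2) := fun i => by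
    rw [mul_assoc]
    exact mul_le_mul_of_nonneg_left (div_mul_sq_le_add_mul_sq (hl i) (hP i) (hcs i)) (hγ i).le
  by_cases h0 : (fun i => φ i 0) = 0
  · have hφ0 : ∀ i, φ i 0 = 0 := fun i => congrFun h0 i
    refine Finset.sum_pos' (fun i _ => by simpa [hφ0] using hbound i) ⟨i₀, Finset.mem_univ _, ?_⟩
    have hT := integral_sq_pos_of_ne_zero (hg i₀) (hg2 i₀) (hφ i₀) (hφ0 i₀) hs hφs
    refine mul_pos (hγ i₀) (add_mul_sq_pos hT (hP i₀) ?_)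
    simpa [hφ0] using hcs i₀
  · exact (hQ _ hsum h0).trans_le (Finset.sum_le_sum fun i _ => hbound i)

theorem cubic_pos_of_forall_pos (hγ : ∀ i, 0 < γ i) (hl : ∀ i, 0 < l i) (hh : ∀ i, 0 < h i) :
    0 < γ 0 * (1 + l 0 * h 0) * h 1 * h 2 + γ 1 * (1 + l 1 * h 1) * h 0 * h 2
      + γ 2 * (1 + l 2 * h 2) * h 0 * h 1 := by
  have hP : ∀ i, 0 < γ i * (1 + l i * h i) := fun i => by
    have := hγ i; have := hl i; have := hh i; positivity
  nlinarith [mul_pos (mul_pos (hP 0) (hh 1)) (hh 2), mul_pos (mul_pos (hP 1) (hh 0)) (hh 2),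
    mul_pos (mul_pos (hP 2) (hh 0)) (hh 1)]

theorem one_add_mul_pos_of_junction_condition (hγ : ∀ i, 0 < γ i) (hl : ∀ i, 0 < l i)
    (hpair : ∀ i j : Fin 3, i ≠ j → 0 < h i ∨ 0 < h j)
    (hcubic : 0 < γ 0 * (1 + l 0 * h 0) * h 1 * h 2 + γ 1 * (1 + l 1 * h 1) * h 0 * h 2
      + γ 2 * (1 + l 2 * h 2) * h 0 * h 1)
    (i : Fin 3) : 0 < 1 + l i * h i := by
  rcases lt_or_ge 0 (h i) with hi | hi
  · have := hl i; positivity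
  rw [pairwise_fin_three_iff] at hpair
  obtain ⟨h01, h02, h12⟩ := hpair
  obtain rfl | rfl | rfl : i = 0 ∨ i = 1 ∨ i = 2 := by fin_cases i <;> simp
  · exact one_add_mul_pos_of_cubic_pos (hγ 0) (hγ 1) (hγ 2) (hl 0) (hl 1) (hl 2)
      (h01.resolve_left hi.not_gt) (h02.resolve_left hi.not_gt) hcubic
  · exact one_add_mul_pos_of_cubic_pos (hγ 1) (hγ 2) (hγ 0) (hl 1) (hl 2) (hl 0)
      (h12.resolve_left hi.not_gt) (h01.resolve_right hi.not_gt) (by linarith)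
  · exact one_add_mul_pos_of_cubic_pos (hγ 2) (hγ 0) (hγ 1) (hl 2) (hl 0) (hl 1)
      (h02.resolve_right hi.not_gt) (h12.resolve_right hi.not_gt) (by linarith)

theorem junction_condition_iff (hP : ∀ i, 0 < 1 + l i * h i) :
    ((∀ i j : Fin 3, i ≠ j → 0 < h i ∨ 0 < h j) ∧
        0 < γ 0 * (1 + l 0 * h 0) * h 1 * h 2 + γ 1 * (1 + l 1 * h 1) * h 0 * h 2
          + γ 2 * (1 + l 2 * h 2) * h 0 * h 1) ↔
      (∀ i j : Fin 3, i ≠ j → 0 < junctionCoeff l h i ∨ 0 < junctionCoeff l h j) ∧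
        0 < γ 0 * junctionCoeff l h 1 * junctionCoeff l h 2
          + γ 1 * junctionCoeff l h 0 * junctionCoeff l h 2
          + γ 2 * junctionCoeff l h 0 * junctionCoeff l h 1 := by
  have hcubic : γ 0 * (1 + l 0 * h 0) * h 1 * h 2 + γ 1 * (1 + l 1 * h 1) * h 0 * h 2
      + γ 2 * (1 + l 2 * h 2) * h 0 * h 1
      = (γ 0 * junctionCoeff l h 1 * junctionCoeff l h 2
          + γ 1 * junctionCoeff l h 0 * junctionCoeff l h 2
          + γ 2 * junctionCoeff l h 0 * junctionCoeff l h 1)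
        * ((1 + l 0 * h 0) * (1 + l 1 * h 1) * (1 + l 2 * h 2)) := by
    simp only [junctionCoeff]
    have := (hP 0).ne'; have := (hP 1).ne'; have := (hP 2).ne'
    generalize 1 + l 0 * h 0 = P₀ at *
    generalize 1 + l 1 * h 1 = P₁ at *
    generalize 1 + l 2 * h 2 = P₂ at *
    field_simp
  have hprod : 0 < (1 + l 0 * h 0) * (1 + l 1 * h 1) * (1 + l 2 * h 2) :=
    mul_pos (mul_pos (hP 0) (hP 1)) (hP 2)
  simp only [hcubic, mul_pos_iff_of_pos_right hprod, junctionCoeff,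
    div_pos_iff_of_pos_right (hP _)]

end Network

theorem stmt5 (γ l h : Fin 3 → ℝ) (hγ : ∀ i, 0 < γ i) (hl : ∀ i, 0 < l i) :
    (∀ φ g : Fin 3 → ℝ → ℝ, MemE γ l φ g →
        (∃ i, ∃ s ∈ Set.Icc (0 : ℝ) (l i), φ i s ≠ 0) → 0 < Istar γ l h φ g)
    ↔ ((∀ i, 0 < h i) ∨
        ((∀ i j : Fin 3, i ≠ j → 0 < h i ∨ 0 < h j) ∧
          0 < γ 0 * (1 + l 0 * h 0) * h 1 * h 2 + γ 1 * (1 + l 1 * h 1) * h 0 * h 2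
            + γ 2 * (1 + l 2 * h 2) * h 0 * h 1)) := by
  constructor
  · intro H
    have hP := one_add_mul_pos_of_istarPosDef hγ hl H
    exact Or.inr <| (junction_condition_iff hP).2 <|
      (sum_quadForm_pos_iff hγ).1 (quadForm_pos_of_istarPosDef hl hP H)
  · intro hcond
    obtain ⟨hpair, hcubic⟩ := hcond.elim
      (fun hh => ⟨fun i _ _ => Or.inl (hh i), cubic_pos_of_forall_pos hγ hl hh⟩) id
    have hP := one_add_mul_pos_of_junction_condition hγ hl hpair hcubic
    exact istarPosDef_of_quadForm_pos hγ hl hP <|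
      (sum_quadForm_pos_iff hγ).2 <| (junction_condition_iff hP).1 ⟨hpair, hcubic⟩
end

section
/- Let γ¹,γ²,γ³ > 0, l¹,l²,l³ > 0, h¹_*,h²_*,h³_* ∈ ℝ, and let c₀ ∈ ℝ be such that I_*[φ] ≥ c₀ Σᵢ₌₁³ γⁱ ∫₀^{lⁱ} (φⁱ)² ds for all φ ∈ E. Then for every ε > 0 there exists δ > 0 with the following property: whenever h¹,h²,h³ ∈ ℝ and L¹,L²,L³ > 0 satisfy |hⁱ − hⁱ_*| < δ and |Lⁱ − lⁱ| < δ for i = 1,2,3, the perturbed form I[φ] = Σᵢ₌₁³ γⁱ ( ∫₀^{Lⁱ} (∂_s φⁱ)² ds + hⁱ φⁱ(Lⁱ)² ) satisfies I[φ] ≥ (c₀ − ε) Σᵢ₌₁³ γⁱ ∫₀^{Lⁱ} (φⁱ)² ds for all φ = (φ¹,φ²,φ³) ∈ H¹(0,L¹)×H¹(0,L²)×H¹(0,L³) with Σᵢ₌₁³ γⁱ φⁱ(0) = 0. -/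
open MeasureTheory

/-- The quadratic form `I[φ] = Σ γⁱ ( ∫ (∂ₛφⁱ)² + hⁱ φⁱ(Lⁱ)² )`,
where `gⁱ` denotes the derivative of `φⁱ`. -/
noncomputable def Iform (γ L h : Fin 3 → ℝ) (φ g : Fin 3 → ℝ → ℝ) : ℝ :=
  ∑ i, γ i * ((∫ s in (0 : ℝ)..(L i), (g i s) ^ 2) + h i * (φ i (L i)) ^ 2)

/-!
A competitor `φ` on the perturbed lengths `L` is transplanted to the reference lengths `l` by the
rescaling `s ↦ (Lⁱ / lⁱ) s`, which keeps the junction values `φⁱ(0)` and the end values `φⁱ(Lⁱ)`;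
it multiplies the Dirichlet energy by `Lⁱ / lⁱ` and the `L²` mass by `lⁱ / Lⁱ`, so the hypothesis
bounds the rescaled form. We use that bound only with weight `1 - μ`: the spare `μ ∫ (∂ₛφⁱ)²`
absorbs, through the trace inequality `r φ(L)² ≤ 2 r² ∫ (∂ₛφ)² + 2 ∫ φ²`, the error in the boundary
terms, and every other coefficient is close to its value at `(h, L) = (h_*, l)`, where the required
inequalities hold strictly.
-/

open Set Filter Topology

structure HasL2Deriv (L : ℝ) (φ g : ℝ → ℝ) : Prop where
  intervalIntegrable : IntervalIntegrable g volume 0 L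
  intervalIntegrable_sq : IntervalIntegrable (fun s => g s ^ 2) volume 0 L
  eq_add_integral : ∀ s ∈ Icc 0 L, φ s = φ 0 + ∫ u in (0 : ℝ)..s, g u

theorem sq_intervalIntegral_le {a b : ℝ} {g : ℝ → ℝ} (hab : a ≤ b)
    (hg : IntervalIntegrable g volume a b)
    (hg2 : IntervalIntegrable (fun s => g s ^ 2) volume a b) :
    (∫ u in a..b, g u) ^ 2 ≤ (b - a) * ∫ u in a..b, g u ^ 2 := by
  have hquad (x : ℝ) :
      0 ≤ (b - a) * (x * x) + (-2 * ∫ u in a..b, g u) * x + ∫ u in a..b, g u ^ 2 := by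
    have hexp : (∫ u in a..b, (g u - x) ^ 2)
        = (b - a) * (x * x) + (-2 * ∫ u in a..b, g u) * x + ∫ u in a..b, g u ^ 2 := by
      simp_rw [sub_sq]
      have hlin := (hg.const_mul 2).mul_const x
      rw [intervalIntegral.integral_add (hg2.sub hlin) intervalIntegrable_const,
        intervalIntegral.integral_sub hg2 hlin, intervalIntegral.integral_mul_const,
        intervalIntegral.integral_const_mul, intervalIntegral.integral_const, smul_eq_mul]
      ring
    exact hexp ▸ intervalIntegral.integral_nonneg hab fun u _ => sq_nonneg _
  have := discrim_le_zero hquad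
  rw [discrim] at this
  nlinarith

namespace HasL2Deriv

variable {L a b : ℝ} {φ g : ℝ → ℝ}

theorem continuousOn (hφ : HasL2Deriv L φ g) (hL : 0 ≤ L) : ContinuousOn φ (Icc 0 L) := by
  have := intervalIntegral.continuousOn_primitive_interval' hφ.intervalIntegrable left_mem_uIcc
  rw [uIcc_of_le hL] at this
  exact (continuousOn_const.add this).congr hφ.eq_add_integral

theorem intervalIntegrable_sq_self (hφ : HasL2Deriv L φ g) (ha : 0 ≤ a) (hab : a ≤ b)
    (hbL : b ≤ L) : IntervalIntegrable (fun s => φ s ^ 2) volume a b :=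
  ((hφ.continuousOn (ha.trans (hab.trans hbL))).pow 2).mono
    (by rw [uIcc_of_le hab]; exact Icc_subset_Icc ha hbL) |>.intervalIntegrable

theorem sub_eq_integral (hφ : HasL2Deriv L φ g) (ha : 0 ≤ a) (hab : a ≤ b) (hbL : b ≤ L) :
    φ b - φ a = ∫ u in a..b, g u := by
  have hsub {c : ℝ} (hc : 0 ≤ c) (hcL : c ≤ L) : IntervalIntegrable g volume 0 c :=
    hφ.intervalIntegrable.mono_set <| uIcc_subset_uIcc_left <| by
      rw [uIcc_of_le (hc.trans hcL)]; exact ⟨hc, hcL⟩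
  rw [hφ.eq_add_integral b ⟨ha.trans hab, hbL⟩, hφ.eq_add_integral a ⟨ha, hab.trans hbL⟩,
    ← intervalIntegral.integral_add_adjacent_intervals (hsub ha (hab.trans hbL))
      ((hsub ha (hab.trans hbL)).symm.trans (hsub (ha.trans hab) hbL))]
  ring

theorem sq_sub_le (hφ : HasL2Deriv L φ g) (ha : 0 ≤ a) (hab : a ≤ b) (hbL : b ≤ L) :
    (φ b - φ a) ^ 2 ≤ (b - a) * ∫ u in (0 : ℝ)..L, g u ^ 2 := by
  have hsub : uIcc a b ⊆ uIcc 0 L := by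
    rw [uIcc_of_le hab, uIcc_of_le (ha.trans (hab.trans hbL))]; exact Icc_subset_Icc ha hbL
  rw [hφ.sub_eq_integral ha hab hbL]
  calc (∫ u in a..b, g u) ^ 2 ≤ (b - a) * ∫ u in a..b, g u ^ 2 :=
        sq_intervalIntegral_le hab (hφ.intervalIntegrable.mono_set hsub)
          (hφ.intervalIntegrable_sq.mono_set hsub)
    _ ≤ (b - a) * ∫ u in (0 : ℝ)..L, g u ^ 2 := by
        gcongr
        exact intervalIntegral.integral_mono_interval ha hab hbL
          (Eventually.of_forall fun u => sq_nonneg (g u)) hφ.intervalIntegrable_sq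

theorem mul_sq_endpoint_le (hφ : HasL2Deriv L φ g) {r : ℝ} (hr : 0 ≤ r) (hrL : r ≤ L) :
    r * φ L ^ 2 ≤ 2 * r ^ 2 * (∫ u in (0 : ℝ)..L, g u ^ 2) + 2 * ∫ u in (0 : ℝ)..L, φ u ^ 2 := by
  set G := ∫ u in (0 : ℝ)..L, g u ^ 2
  have hG : 0 ≤ G := intervalIntegral.integral_nonneg (hr.trans hrL) fun u _ => sq_nonneg (g u)
  have hpt : ∀ s ∈ Icc (L - r) L, φ L ^ 2 ≤ 2 * φ s ^ 2 + 2 * r * G := by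
    intro s hs
    have hdiff := hφ.sq_sub_le (by linarith [hs.1]) hs.2 le_rfl
    have hLs : (L - s) * G ≤ r * G := mul_le_mul_of_nonneg_right (by linarith [hs.1]) hG
    nlinarith [sq_nonneg (φ L - 2 * φ s)]
  have hint := hφ.intervalIntegrable_sq_self (a := L - r) (by linarith) (by linarith) le_rfl
  calc r * φ L ^ 2 = ∫ _ in (L - r)..L, φ L ^ 2 := by simp
    _ ≤ ∫ s in (L - r)..L, (2 * φ s ^ 2 + 2 * r * G) :=
        intervalIntegral.integral_mono_on (by linarith) intervalIntegrable_const
          ((hint.const_mul 2).add intervalIntegrable_const) hpt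
    _ = 2 * r ^ 2 * G + 2 * ∫ s in (L - r)..L, φ s ^ 2 := by
        rw [intervalIntegral.integral_add (hint.const_mul 2) intervalIntegrable_const,
          intervalIntegral.integral_const_mul, intervalIntegral.integral_const, smul_eq_mul]
        ring
    _ ≤ 2 * r ^ 2 * G + 2 * ∫ u in (0 : ℝ)..L, φ u ^ 2 := by
        gcongr
        exact intervalIntegral.integral_mono_interval (by linarith) (by linarith) le_rfl
          (Eventually.of_forall fun u => sq_nonneg (φ u))
          (hφ.intervalIntegrable_sq_self le_rfl (hr.trans hrL) le_rfl)

theorem nonneg_of_trace_absorbed (hφ : HasL2Deriv L φ g) {r K a k b : ℝ} (hr : 0 < r)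
    (hrL : r ≤ L) (hK : 0 ≤ K) (hk : -K ≤ k) (ha : 2 * r * K ≤ a) (hb : 2 * K ≤ r * b) :
    0 ≤ a * (∫ u in (0 : ℝ)..L, g u ^ 2) + k * φ L ^ 2 + b * ∫ u in (0 : ℝ)..L, φ u ^ 2 := by
  have hG : 0 ≤ ∫ u in (0 : ℝ)..L, g u ^ 2 :=
    intervalIntegral.integral_nonneg (hr.le.trans hrL) fun u _ => sq_nonneg (g u)
  have hB : 0 ≤ ∫ u in (0 : ℝ)..L, φ u ^ 2 :=
    intervalIntegral.integral_nonneg (hr.le.trans hrL) fun u _ => sq_nonneg (φ u)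
  have htrace := hφ.mul_sq_endpoint_le hr.le hrL
  have hku := mul_le_mul_of_nonneg_right hk (mul_nonneg hr.le (sq_nonneg (φ L)))
  have hKu := mul_le_mul_of_nonneg_left htrace hK
  refine (mul_nonneg_iff_of_pos_left hr).1 ?_
  nlinarith [mul_le_mul_of_nonneg_right ha (mul_nonneg hr.le hG),
    mul_le_mul_of_nonneg_right hb hB]

theorem comp_mul_left {l c : ℝ} (hφ : HasL2Deriv (c * l) φ g) (hc : 0 < c) :
    HasL2Deriv l (fun s => φ (c * s)) (fun s => c * g (c * s)) where
  intervalIntegrable := by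
    simpa [hc.ne'] using (hφ.intervalIntegrable.comp_mul_left (c := c)).const_mul c
  intervalIntegrable_sq := by
    simpa [hc.ne', mul_pow] using
      (hφ.intervalIntegrable_sq.comp_mul_left (c := c)).const_mul (c ^ 2)
  eq_add_integral s hs := by
    rw [intervalIntegral.integral_const_mul, intervalIntegral.integral_comp_mul_left _ hc.ne',
      smul_eq_mul, mul_inv_cancel_left₀ hc.ne', mul_zero,
      hφ.eq_add_integral _ ⟨by nlinarith [hs.1], by nlinarith [hs.2]⟩]

end HasL2Deriv

theorem memE_iff {γ l : Fin 3 → ℝ} {φ g : Fin 3 → ℝ → ℝ} :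
    MemE γ l φ g ↔ (∀ i, HasL2Deriv (l i) (φ i) (g i)) ∧ ∑ i, γ i * φ i 0 = 0 :=
  ⟨fun ⟨h₁, h₂, h₃, h₄⟩ => ⟨fun i => ⟨h₁ i, h₂ i, h₃ i⟩, h₄⟩,
    fun ⟨h, h₄⟩ => ⟨fun i => (h i).1, fun i => (h i).2, fun i => (h i).3, h₄⟩⟩

theorem coercivity_rescaled {γ l hst L : Fin 3 → ℝ} {c₀ : ℝ}
    (hcoer : ∀ φ g : Fin 3 → ℝ → ℝ, MemE γ l φ g →
      c₀ * ∑ i, γ i * ∫ s in (0 : ℝ)..(l i), (φ i s) ^ 2 ≤ Iform γ l hst φ g)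
    (hl : ∀ i, 0 < l i) (hL : ∀ i, 0 < L i) {φ g : Fin 3 → ℝ → ℝ} (hmem : MemE γ L φ g) :
    c₀ * ∑ i, γ i * (l i / L i * ∫ s in (0 : ℝ)..(L i), φ i s ^ 2)
      ≤ ∑ i, γ i * (L i / l i * (∫ s in (0 : ℝ)..(L i), g i s ^ 2) + hst i * φ i (L i) ^ 2) := by
  obtain ⟨hφ, hsum⟩ := memE_iff.1 hmem
  have hc (i) : L i / l i * l i = L i := div_mul_cancel₀ _ (hl i).ne'
  have hψ : MemE γ l (fun i s => φ i (L i / l i * s))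
      (fun i s => L i / l i * g i (L i / l i * s)) :=
    memE_iff.2 ⟨fun i => ((hc i).symm ▸ hφ i).comp_mul_left (div_pos (hL i) (hl i)),
      by simpa using hsum⟩
  have hcomp (i) (f : ℝ → ℝ) :
      ∫ s in (0 : ℝ)..l i, f (L i / l i * s) = l i / L i * ∫ s in (0 : ℝ)..L i, f s := by
    rw [intervalIntegral.integral_comp_mul_left _ (div_pos (hL i) (hl i)).ne', mul_zero, hc,
      inv_div, smul_eq_mul]
  have hB (i) : ∫ s in (0 : ℝ)..l i, φ i (L i / l i * s) ^ 2
      = l i / L i * ∫ s in (0 : ℝ)..L i, φ i s ^ 2 := hcomp i fun s => φ i s ^ 2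
  have hG (i) : ∫ s in (0 : ℝ)..l i, (L i / l i * g i (L i / l i * s)) ^ 2
      = L i / l i * ∫ s in (0 : ℝ)..L i, g i s ^ 2 := by
    simp_rw [mul_pow]
    rw [intervalIntegral.integral_const_mul, hcomp i fun s => g i s ^ 2]
    field_simp [(hl i).ne', (hL i).ne']
  simpa only [Iform, hB, hG, hc] using hcoer _ _ hψ

/-- With `p = (hⁱ, Lⁱ)`, the right-hand side is the contribution of one edge to `I[φ] - (c₀ - ε) ∫ φ²`
minus `1 - μ` times the inequality of `coercivity_rescaled`. -/
theorem eventually_nonneg_perturbed_form (c₀ hs : ℝ) {ε l : ℝ} (hε : 0 < ε) (hl : 0 < l) :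
    ∀ᶠ μ in 𝓝[>] (0 : ℝ), ∀ᶠ p : ℝ × ℝ in 𝓝 (hs, l), ∀ φ g, HasL2Deriv p.2 φ g →
      0 ≤ (1 - (1 - μ) * (p.2 / l)) * (∫ s in (0 : ℝ)..p.2, g s ^ 2)
        + (p.1 - (1 - μ) * hs) * φ p.2 ^ 2
        + (ε - c₀ + (1 - μ) * c₀ * (l / p.2)) * ∫ s in (0 : ℝ)..p.2, φ s ^ 2 := by
  set M := |hs| + 1
  have hpos : ∀ᶠ x in 𝓝[>] (0 : ℝ), 0 < x := eventually_mem_nhdsWithin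
  obtain ⟨r, ⟨hrl, hrM⟩, hr⟩ : ∃ r, (r < l ∧ 2 * r * M < 1) ∧ 0 < r :=
    (((eventually_lt_nhds hl).and ((show Continuous fun r : ℝ => 2 * r * M by fun_prop)
      |>.continuousAt.eventually_lt continuousAt_const (by simp))).filter_mono
        nhdsWithin_le_nhds |>.and hpos).exists
  have hμ : ∀ᶠ μ in 𝓝[>] (0 : ℝ), 0 < μ ∧ μ * (2 * M + r * c₀) < r * ε :=
    hpos.and <| ((show Continuous fun μ : ℝ => μ * (2 * M + r * c₀) by fun_prop)
      |>.continuousAt.eventually_lt continuousAt_const (by simpa using mul_pos hr hε)).filter_mono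
        nhdsWithin_le_nhds
  refine hμ.mono fun μ ⟨hμ0, hμε⟩ => ?_
  have hL : ∀ᶠ p : ℝ × ℝ in 𝓝 (hs, l), r < p.2 :=
    (continuous_snd.tendsto (hs, l)).eventually (lt_mem_nhds hrl)
  have ha : ∀ᶠ p : ℝ × ℝ in 𝓝 (hs, l), 2 * r * (μ * M) < 1 - (1 - μ) * (p.2 / l) :=
    continuousAt_const.eventually_lt (by fun_prop) <| by
      rw [div_self hl.ne']; nlinarith [mul_lt_mul_of_pos_left hrM hμ0]
  have hk : ∀ᶠ p : ℝ × ℝ in 𝓝 (hs, l), -(μ * M) < p.1 - (1 - μ) * hs :=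
    continuousAt_const.eventually_lt (by fun_prop) <| by
      nlinarith [mul_pos hμ0 (show 0 < hs + M by linarith [neg_abs_le hs])]
  have hb : ∀ᶠ p : ℝ × ℝ in 𝓝 (hs, l),
      2 * (μ * M) < r * (ε - c₀ + (1 - μ) * c₀ * (l / p.2)) :=
    continuousAt_const.eventually_lt (by fun_prop (disch := exact hl.ne')) <| by
      rw [div_self hl.ne']; linarith
  filter_upwards [hL, ha, hk, hb] with p hL ha hk hb φ g hφ
  exact hφ.nonneg_of_trace_absorbed hr hL.le (by positivity) hk.le ha.le hb.le

theorem stmt7 (γ l hst : Fin 3 → ℝ) (hγ : ∀ i, 0 < γ i) (hl : ∀ i, 0 < l i)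
    (c₀ : ℝ)
    (hcoer : ∀ φ g : Fin 3 → ℝ → ℝ, MemE γ l φ g →
      c₀ * ∑ i, γ i * ∫ s in (0 : ℝ)..(l i), (φ i s) ^ 2 ≤ Iform γ l hst φ g) :
    ∀ ε > (0 : ℝ), ∃ δ > (0 : ℝ), ∀ h L : Fin 3 → ℝ, (∀ i, 0 < L i) →
      (∀ i, |h i - hst i| < δ) → (∀ i, |L i - l i| < δ) →
      ∀ φ g : Fin 3 → ℝ → ℝ, MemE γ L φ g →
        (c₀ - ε) * ∑ i, γ i * ∫ s in (0 : ℝ)..(L i), (φ i s) ^ 2 ≤ Iform γ L h φ g := by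
  intro ε hε
  obtain ⟨μ, hμ1, hμ⟩ := ((eventually_le_nhds zero_lt_one).filter_mono nhdsWithin_le_nhds
    |>.and (eventually_all.2 fun i => eventually_nonneg_perturbed_form c₀ (hst i) hε (hl i))).exists
  have hnear : ∀ᶠ p : (Fin 3 → ℝ) × (Fin 3 → ℝ) in 𝓝 (hst, l), ∀ i, _ :=
    eventually_all.2 fun i =>
      (((continuous_apply i).prodMap (continuous_apply i)).tendsto (hst, l)).eventually (hμ i)
  obtain ⟨δ, hδ, hball⟩ := Metric.eventually_nhds_iff.1 hnear
  refine ⟨δ, hδ, fun h L hL hh hLl φ g hmem => ?_⟩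
  have hdist : dist (h, L) (hst, l) < δ :=
    max_lt ((dist_pi_lt_iff hδ).2 hh) ((dist_pi_lt_iff hδ).2 hLl)
  have key (i) := mul_nonneg (hγ i).le (hball hdist i (φ i) (g i) ((memE_iff.1 hmem).1 i))
  have hresc :=
    mul_le_mul_of_nonneg_left (coercivity_rescaled hcoer hl hL hmem) (sub_nonneg.2 hμ1)
  simp only [Iform, Fin.sum_univ_three, Prod.map_apply] at key hresc ⊢
  linear_combination key 0 + key 1 + key 2 + hresc
end

section
/- Let γ¹,γ²,γ³ > 0, l¹,l²,l³ > 0 and h¹_*,h²_*,h³_* ∈ ℝ, and assume the quadratic form I_* is positive definite on E (I_*[φ] > 0 for every nonzero φ ∈ E). Suppose ρⁱ : [0,lⁱ] → ℝ (i = 1,2,3) are C² functions such that: ∂_s²ρⁱ ≡ 0 on [0,lⁱ] for i = 1,2,3; ∂_sρⁱ(lⁱ) + hⁱ_* ρⁱ(lⁱ) = 0 for i = 1,2,3; ∂_sρ¹(0) = ∂_sρ²(0) = ∂_sρ³(0); and Σᵢ₌₁³ γⁱ ρⁱ(0) = 0. Then ρⁱ ≡ 0 for i = 1,2,3. -/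
open MeasureTheory

open Set

section Affine

variable {E : Type*} [NormedAddCommGroup E] [NormedSpace ℝ E] {a b : ℝ}

theorem eq_of_hasDerivWithinAt_Icc_eq {f g f' : ℝ → E}
    (hf : ∀ x ∈ Icc a b, HasDerivWithinAt f (f' x) (Icc a b) x)
    (hg : ∀ x ∈ Icc a b, HasDerivWithinAt g (f' x) (Icc a b) x) (hfg : f a = g a) :
    ∀ x ∈ Icc a b, f x = g x := by
  have right_deriv {u : ℝ → E} (hu : ∀ x ∈ Icc a b, HasDerivWithinAt u (f' x) (Icc a b) x) :
      ∀ x ∈ Ico a b, HasDerivWithinAt u (f' x) (Ici x) x := fun x hx =>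
    (hu x (mem_Icc_of_Ico hx)).mono_of_mem_nhdsWithin (Icc_mem_nhdsGE_of_mem hx)
  exact eq_of_has_deriv_right_eq (right_deriv hf) (right_deriv hg)
    (fun x hx => (hf x hx).continuousWithinAt) (fun x hx => (hg x hx).continuousWithinAt) hfg

theorem eq_affine_of_hasDerivWithinAt_Icc {f f' : ℝ → E}
    (hf : ∀ x ∈ Icc a b, HasDerivWithinAt f (f' x) (Icc a b) x)
    (hf' : ∀ x ∈ Icc a b, HasDerivWithinAt f' 0 (Icc a b) x) :
    ∀ x ∈ Icc a b, f' x = f' a ∧ f x = f a + (x - a) • f' a := by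
  have hslope : ∀ x ∈ Icc a b, f' x = f' a :=
    eq_of_hasDerivWithinAt_Icc_eq hf' (fun x _ => hasDerivWithinAt_const x _ (f' a)) rfl
  have hline : ∀ x ∈ Icc a b,
      HasDerivWithinAt (fun y => f a + (y - a) • f' a) (f' x) (Icc a b) x := fun x hx => by
    simpa [hslope x hx] using
      (((hasDerivWithinAt_id x _).sub_const a).smul_const (f' a)).const_add (f a)
  exact fun x hx => ⟨hslope x hx, eq_of_hasDerivWithinAt_Icc_eq hf hline (by simp) x hx⟩

end Affine

theorem edge_energy_of_robin {l h φ₀ c : ℝ} (hrobin : c + h * (φ₀ + c * l) = 0) :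
    (∫ _ in (0 : ℝ)..l, c ^ 2) + h * (φ₀ + c * l) ^ 2 = -(c * φ₀) := by
  rw [intervalIntegral.integral_const, smul_eq_mul, sub_zero]
  linear_combination (φ₀ + c * l) * hrobin

theorem memE_of_affine {γ l : Fin 3 → ℝ} {φ : Fin 3 → ℝ → ℝ} {c : ℝ}
    (haff : ∀ i, ∀ s ∈ Icc (0 : ℝ) (l i), φ i s = φ i 0 + c * s)
    (hjunction : ∑ i, γ i * φ i 0 = 0) : MemE γ l φ (fun _ _ => c) := by
  refine ⟨fun _ => intervalIntegrable_const, fun _ => intervalIntegrable_const,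
    fun i s hs => ?_, hjunction⟩
  rw [haff i s hs, intervalIntegral.integral_const, smul_eq_mul, sub_zero, mul_comm]

theorem Istar_affine_eq {γ l h : Fin 3 → ℝ} {φ : Fin 3 → ℝ → ℝ} {c : ℝ}
    (hend : ∀ i, φ i (l i) = φ i 0 + c * l i) (hrobin : ∀ i, c + h i * φ i (l i) = 0) :
    Istar γ l h φ (fun _ _ => c) = -(c * ∑ i, γ i * φ i 0) := by
  simp only [Istar, hend]
  rw [Finset.mul_sum, ← Finset.sum_neg_distrib]
  refine Finset.sum_congr rfl fun i _ => ?_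
  rw [edge_energy_of_robin (by rw [← hend]; exact hrobin i)]
  ring

theorem stmt8_general (γ l h : Fin 3 → ℝ) (hl : ∀ i, 0 < l i)
    -- `I_*` is positive definite on `E`
    (hpos : ∀ φ g : Fin 3 → ℝ → ℝ, MemE γ l φ g →
      (∃ i, ∃ s ∈ Set.Icc (0 : ℝ) (l i), φ i s ≠ 0) → 0 < Istar γ l h φ g)
    -- ρⁱ is C² on [0, lⁱ] with first derivative ρ'ⁱ and second derivative ρ''ⁱ
    (ρ ρ' ρ'' : Fin 3 → ℝ → ℝ)
    (hρd : ∀ i, ∀ s ∈ Set.Icc (0 : ℝ) (l i),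
      HasDerivWithinAt (ρ i) (ρ' i s) (Set.Icc 0 (l i)) s)
    (hρd2 : ∀ i, ∀ s ∈ Set.Icc (0 : ℝ) (l i),
      HasDerivWithinAt (ρ' i) (ρ'' i s) (Set.Icc 0 (l i)) s)
    -- ∂ₛ²ρⁱ ≡ 0
    (hlin : ∀ i, ∀ s ∈ Set.Icc (0 : ℝ) (l i), ρ'' i s = 0)
    -- ∂ₛρⁱ(lⁱ) + hⁱ_* ρⁱ(lⁱ) = 0
    (hbc : ∀ i, ρ' i (l i) + h i * ρ i (l i) = 0)
    -- ∂ₛρ¹(0) = ∂ₛρ²(0) = ∂ₛρ³(0)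
    (hjder : ρ' 0 0 = ρ' 1 0 ∧ ρ' 1 0 = ρ' 2 0)
    -- Σ γⁱ ρⁱ(0) = 0
    (hjsum : ∑ i, γ i * ρ i 0 = 0) :
    ∀ i, ∀ s ∈ Set.Icc (0 : ℝ) (l i), ρ i s = 0 := by
  have hedge i := eq_affine_of_hasDerivWithinAt_Icc (hρd i) fun s hs => hlin i s hs ▸ hρd2 i s hs
  have hslope0 : ∀ i, ρ' i 0 = ρ' 0 0 := by
    intro i; fin_cases i
    exacts [rfl, hjder.1.symm, (hjder.1.trans hjder.2).symm]
  have haff i s (hs : s ∈ Icc (0 : ℝ) (l i)) : ρ i s = ρ i 0 + ρ' 0 0 * s := by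
    rw [(hedge i s hs).2, sub_zero, smul_eq_mul, hslope0, mul_comm]
  have hend i : l i ∈ Icc (0 : ℝ) (l i) := right_mem_Icc.2 (hl i).le
  have hrobin i : ρ' 0 0 + h i * ρ i (l i) = 0 := by
    rw [← hslope0 i, ← (hedge i _ (hend i)).1]; exact hbc i
  have hI : Istar γ l h ρ (fun _ _ => ρ' 0 0) = 0 := by
    rw [Istar_affine_eq (fun i => haff i _ (hend i)) hrobin, hjsum, mul_zero, neg_zero]
  by_contra! hne
  exact (hpos ρ _ (memE_of_affine haff hjsum) hne).ne' hI

theorem stmt8 (γ l h : Fin 3 → ℝ) (hγ : ∀ i, 0 < γ i) (hl : ∀ i, 0 < l i)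
    -- `I_*` is positive definite on `E`
    (hpos : ∀ φ g : Fin 3 → ℝ → ℝ, MemE γ l φ g →
      (∃ i, ∃ s ∈ Set.Icc (0 : ℝ) (l i), φ i s ≠ 0) → 0 < Istar γ l h φ g)
    -- ρⁱ is C² on [0, lⁱ] with first derivative ρ'ⁱ and second derivative ρ''ⁱ
    (ρ ρ' ρ'' : Fin 3 → ℝ → ℝ)
    (hρd : ∀ i, ∀ s ∈ Set.Icc (0 : ℝ) (l i),
      HasDerivWithinAt (ρ i) (ρ' i s) (Set.Icc 0 (l i)) s)
    (hρd2 : ∀ i, ∀ s ∈ Set.Icc (0 : ℝ) (l i),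
      HasDerivWithinAt (ρ' i) (ρ'' i s) (Set.Icc 0 (l i)) s)
    (hρc : ∀ i, ContinuousOn (ρ'' i) (Set.Icc 0 (l i)))
    -- ∂ₛ²ρⁱ ≡ 0
    (hlin : ∀ i, ∀ s ∈ Set.Icc (0 : ℝ) (l i), ρ'' i s = 0)
    -- ∂ₛρⁱ(lⁱ) + hⁱ_* ρⁱ(lⁱ) = 0
    (hbc : ∀ i, ρ' i (l i) + h i * ρ i (l i) = 0)
    -- ∂ₛρ¹(0) = ∂ₛρ²(0) = ∂ₛρ³(0)
    (hjder : ρ' 0 0 = ρ' 1 0 ∧ ρ' 1 0 = ρ' 2 0)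
    -- Σ γⁱ ρⁱ(0) = 0
    (hjsum : ∑ i, γ i * ρ i 0 = 0) :
    ∀ i, ∀ s ∈ Set.Icc (0 : ℝ) (l i), ρ i s = 0 :=
  stmt8_general γ l h hl hpos ρ ρ' ρ'' hρd hρd2 hlin hbc hjder hjsum
end

section
/- Let X : [0,S] × [0,T] → ℝ² be a C³ map with ‖∂_s X(s,t)‖ = 1 for all (s,t), and define T = ∂_s X, N = R T, κ = ⟨∂_s T, N⟩, V = ⟨∂_t X, N⟩, v = ⟨∂_t X, T⟩. Then the curvature satisfies the evolution equation ∂_t κ = ∂_s²V + κ² V + v ∂_s κ for all (s,t). -/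
/-!
Write `T = ∂ₛX`. Differentiating `|T|² = 1` gives `⟨∂ₛT, T⟩ = 0`, `⟨∂ₜT, T⟩ = 0` and
`⟨∂ₛ²T, T⟩ = -|∂ₛT|² = -κ²`; these hold up to the boundary of the rectangle because the
rectangle has unique derivatives. Expanding `∂ₜκ`, `∂ₛ²V` and `∂ₛκ` by the product rule and
commuting `∂ₜ∂ₛ = ∂ₛ∂ₜ` (Schwarz), the remaining identity is planar linear algebra: `∂ₛT` and
`∂ₜT` are both multiples of `N`, and `∂ₛ²T` is decomposed in the frame `T, N`.
-/

/-- The anticlockwise rotation of `ℝ²` by `π/2`. -/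
def rot2 (u : ℝ × ℝ) : ℝ × ℝ := (-u.2, u.1)

/-- The Euclidean inner product on `ℝ²`. -/
def dot2 (u w : ℝ × ℝ) : ℝ := u.1 * w.1 + u.2 * w.2

section DirDeriv

variable {E F : Type*} [NormedAddCommGroup E] [NormedSpace ℝ E]
  [NormedAddCommGroup F] [NormedSpace ℝ F]

noncomputable def dirDeriv (u : E) (g : E → F) : E → F := fun q => fderiv ℝ g q u

theorem ContDiff.dirDeriv {n : WithTop ℕ∞} {g : E → F} (hg : ContDiff ℝ (n + 1) g) (u : E) :
    ContDiff ℝ n (dirDeriv u g) :=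
  (hg.fderiv_right le_rfl).clm_apply contDiff_const

theorem dirDeriv_comm {g : E → F} (hg : ContDiff ℝ 2 g) (u w : E) :
    dirDeriv u (dirDeriv w g) = dirDeriv w (dirDeriv u g) := by
  funext q
  have hd : DifferentiableAt ℝ (fderiv ℝ g) q :=
    (hg.fderiv_right (m := 1) (by norm_num)).differentiable one_ne_zero q
  have hsecond (a b : E) : dirDeriv a (dirDeriv b g) q = fderiv ℝ (fderiv ℝ g) q a b := by
    change fderiv ℝ (fun p => fderiv ℝ g p b) q a = _
    simp [fderiv_clm_apply hd (differentiableAt_const b)]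
  rw [hsecond, hsecond]
  exact hg.contDiffAt.isSymmSndFDerivAt (by simp) u w

theorem dirDeriv_add {g h : E → F} {q : E} (hg : DifferentiableAt ℝ g q)
    (hh : DifferentiableAt ℝ h q) (u : E) :
    dirDeriv u (fun p => g p + h p) q = dirDeriv u g q + dirDeriv u h q := by
  simp [dirDeriv, fderiv_fun_add hg hh]

theorem dirDeriv_eq_zero_of_eqOn_const {g : E → F} {U : Set E} {q : E} {c : F}
    (hg : DifferentiableAt ℝ g q) (hU : UniqueDiffOn ℝ U) (hc : ∀ p ∈ U, g p = c) (hq : q ∈ U)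
    (u : E) : dirDeriv u g q = 0 := by
  have hzero : HasFDerivWithinAt g (0 : E →L[ℝ] F) U q :=
    (hasFDerivWithinAt_const c q U).congr hc (hc q hq)
  simp [dirDeriv, (hU q hq).eq hg.hasFDerivAt.hasFDerivWithinAt hzero]

end DirDeriv

notation "∂ₛ" => dirDeriv ((1 : ℝ), (0 : ℝ))
notation "∂ₜ" => dirDeriv ((0 : ℝ), (1 : ℝ))

section Slices

variable {F : Type*} [NormedAddCommGroup F] [NormedSpace ℝ F]

theorem deriv_slice_fst_eq_dirDeriv {g : ℝ × ℝ → F} {s t : ℝ}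
    (hg : DifferentiableAt ℝ g (s, t)) : deriv (fun σ => g (σ, t)) s = ∂ₛ g (s, t) :=
  (hg.hasFDerivAt.comp_hasDerivAt s ((hasDerivAt_id s).prodMk (hasDerivAt_const s t))).deriv

theorem deriv_slice_snd_eq_dirDeriv {g : ℝ × ℝ → F} {s t : ℝ}
    (hg : DifferentiableAt ℝ g (s, t)) : deriv (fun τ => g (s, τ)) t = ∂ₜ g (s, t) :=
  (hg.hasFDerivAt.comp_hasDerivAt t ((hasDerivAt_const t s).prodMk (hasDerivAt_id t))).deriv

end Slices

section Planar

variable {E : Type*} [NormedAddCommGroup E] [NormedSpace ℝ E] {g h : E → ℝ × ℝ} {q : E}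

theorem dot2_comm (u w : ℝ × ℝ) : dot2 u w = dot2 w u := by
  unfold dot2; ring

theorem dot2_rot2_self (u : ℝ × ℝ) : dot2 u (rot2 u) = 0 := by
  unfold dot2 rot2; ring

theorem dot2_rot2_eq_zero_of_orthogonal {e a b : ℝ × ℝ} (he : dot2 e e = 1)
    (ha : dot2 a e = 0) (hb : dot2 b e = 0) : dot2 a (rot2 b) = 0 := by
  linear_combination (norm := (simp only [dot2, rot2]; ring))
    -dot2 a (rot2 b) * he + dot2 a (rot2 e) * hb - dot2 b (rot2 e) * ha

-- `⟨f, R w⟩` expanded in the frame `e, R e`; used with `e = T`, `a = ∂ₛT`, `w = ∂ₛ²T`.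
theorem dot2_rot2_eq_of_frame {e a w : ℝ × ℝ} (f : ℝ × ℝ) (he : dot2 e e = 1)
    (ha : dot2 a e = 0) (hw : dot2 w e = -dot2 a a) :
    dot2 f (rot2 w) = -dot2 a (rot2 e) ^ 2 * dot2 f (rot2 e) - dot2 f e * dot2 w (rot2 e) := by
  linear_combination (norm := (simp only [dot2, rot2]; ring))
    (dot2 a a * dot2 f (rot2 e) - dot2 f (rot2 w)) * he + dot2 f (rot2 e) * hw
      - dot2 f (rot2 e) * dot2 a e * ha

theorem ContDiff.rot2 {n : WithTop ℕ∞} (hg : ContDiff ℝ n g) :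
    ContDiff ℝ n (fun p => rot2 (g p)) :=
  hg.snd.neg.prodMk hg.fst

theorem ContDiff.dot2 {n : WithTop ℕ∞} (hg : ContDiff ℝ n g) (hh : ContDiff ℝ n h) :
    ContDiff ℝ n (fun p => dot2 (g p) (h p)) :=
  (hg.fst.mul hh.fst).add (hg.snd.mul hh.snd)

theorem DifferentiableAt.rot2 (hg : DifferentiableAt ℝ g q) :
    DifferentiableAt ℝ (fun p => rot2 (g p)) q :=
  hg.snd.neg.prodMk hg.fst

theorem DifferentiableAt.dot2 (hg : DifferentiableAt ℝ g q) (hh : DifferentiableAt ℝ h q) :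
    DifferentiableAt ℝ (fun p => dot2 (g p) (h p)) q :=
  (hg.fst.mul hh.fst).add (hg.snd.mul hh.snd)

theorem dirDeriv_rot2 (hg : DifferentiableAt ℝ g q) (u : E) :
    dirDeriv u (fun p => rot2 (g p)) q = rot2 (dirDeriv u g q) := by
  have H := hg.hasFDerivAt.snd.fun_neg.prodMk hg.hasFDerivAt.fst
  simp only [dirDeriv, rot2] at H ⊢
  rw [H.fderiv]
  simp

theorem dirDeriv_dot2 (hg : DifferentiableAt ℝ g q) (hh : DifferentiableAt ℝ h q) (u : E) :
    dirDeriv u (fun p => dot2 (g p) (h p)) q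
      = dot2 (dirDeriv u g q) (h q) + dot2 (g q) (dirDeriv u h q) := by
  have H := (hg.hasFDerivAt.fst.fun_mul hh.hasFDerivAt.fst).fun_add
    (hg.hasFDerivAt.snd.fun_mul hh.hasFDerivAt.snd)
  simp only [dirDeriv, dot2] at H ⊢
  rw [H.fderiv]
  simp
  ring

theorem dot2_dirDeriv_self_eq_zero {U : Set E} (hg : DifferentiableAt ℝ g q)
    (hU : UniqueDiffOn ℝ U) (hunit : ∀ p ∈ U, dot2 (g p) (g p) = 1) (hq : q ∈ U) (u : E) :
    dot2 (dirDeriv u g q) (g q) = 0 := by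
  have h := dirDeriv_eq_zero_of_eqOn_const (hg.dot2 hg) hU hunit hq u
  rw [dirDeriv_dot2 hg hg, dot2_comm (g q)] at h
  linarith

end Planar

section Curve

variable {f : ℝ × ℝ → ℝ × ℝ}

noncomputable def curvature (f : ℝ × ℝ → ℝ × ℝ) : ℝ × ℝ → ℝ :=
  fun q => dot2 (∂ₛ (∂ₛ f) q) (rot2 (∂ₛ f q))

noncomputable def normalSpeed (f : ℝ × ℝ → ℝ × ℝ) : ℝ × ℝ → ℝ :=
  fun q => dot2 (∂ₜ f q) (rot2 (∂ₛ f q))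

noncomputable def tangentialSpeed (f : ℝ × ℝ → ℝ × ℝ) : ℝ × ℝ → ℝ :=
  fun q => dot2 (∂ₜ f q) (∂ₛ f q)

theorem ContDiff.curvature {n : WithTop ℕ∞} (hf : ContDiff ℝ (n + 2) f) :
    ContDiff ℝ n (curvature f) := by
  rw [← one_add_one_eq_two, ← add_assoc] at hf
  have hT : ContDiff ℝ (n + 1) (∂ₛ f) := hf.dirDeriv _
  exact (hT.dirDeriv _).dot2 (hT.of_le le_self_add).rot2

theorem ContDiff.normalSpeed {n : WithTop ℕ∞} (hf : ContDiff ℝ (n + 1) f) :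
    ContDiff ℝ n (normalSpeed f) :=
  (hf.dirDeriv _).dot2 (hf.dirDeriv _).rot2

theorem dirDeriv_curvature (hf : ContDiff ℝ 3 f) (u q : ℝ × ℝ) :
    dirDeriv u (curvature f) q = dot2 (dirDeriv u (∂ₛ (∂ₛ f)) q) (rot2 (∂ₛ f q))
      + dot2 (∂ₛ (∂ₛ f) q) (rot2 (dirDeriv u (∂ₛ f) q)) := by
  have hT : ContDiff ℝ 2 (∂ₛ f) := hf.dirDeriv _
  have dT : DifferentiableAt ℝ (∂ₛ f) q := hT.differentiable two_ne_zero q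
  unfold curvature
  rw [dirDeriv_dot2 ((hT.dirDeriv (n := 1) _).differentiable one_ne_zero q) dT.rot2,
    dirDeriv_rot2 dT]

theorem dirDeriv_normalSpeed (hf : ContDiff ℝ 2 f) (u : ℝ × ℝ) :
    dirDeriv u (normalSpeed f) = fun p => dot2 (dirDeriv u (∂ₜ f) p) (rot2 (∂ₛ f p))
      + dot2 (∂ₜ f p) (rot2 (dirDeriv u (∂ₛ f) p)) := by
  funext p
  have dT : DifferentiableAt ℝ (∂ₛ f) p := (hf.dirDeriv (n := 1) _).differentiable one_ne_zero p
  unfold normalSpeed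
  rw [dirDeriv_dot2 ((hf.dirDeriv (n := 1) _).differentiable one_ne_zero p) dT.rot2,
    dirDeriv_rot2 dT]

theorem curvature_evolution (hf : ContDiff ℝ 3 f) {U : Set (ℝ × ℝ)} (hU : UniqueDiffOn ℝ U)
    (hunit : ∀ p ∈ U, dot2 (∂ₛ f p) (∂ₛ f p) = 1) {q : ℝ × ℝ} (hq : q ∈ U) :
    ∂ₜ (curvature f) q = ∂ₛ (∂ₛ (normalSpeed f)) q + curvature f q ^ 2 * normalSpeed f q
      + tangentialSpeed f q * ∂ₛ (curvature f) q := by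
  have hT : ContDiff ℝ 2 (∂ₛ f) := hf.dirDeriv _
  have hV : ContDiff ℝ 2 (∂ₜ f) := hf.dirDeriv _
  have dT : Differentiable ℝ (∂ₛ f) := hT.differentiable two_ne_zero
  have dV : Differentiable ℝ (∂ₜ f) := hV.differentiable two_ne_zero
  have dK : Differentiable ℝ (∂ₛ (∂ₛ f)) := (hT.dirDeriv (n := 1) _).differentiable one_ne_zero
  have dA : Differentiable ℝ (∂ₛ (∂ₜ f)) := (hV.dirDeriv (n := 1) _).differentiable one_ne_zero
  have hschwarz : ∂ₜ (∂ₛ f) = ∂ₛ (∂ₜ f) := dirDeriv_comm (hf.of_le (by norm_num)) _ _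
  have hTK : ∀ p ∈ U, dot2 (∂ₛ (∂ₛ f) p) (∂ₛ f p) = 0 := fun p hp =>
    dot2_dirDeriv_self_eq_zero (dT p) hU hunit hp _
  have hTA : dot2 (∂ₛ (∂ₜ f) q) (∂ₛ f q) = 0 := by
    rw [← hschwarz]
    exact dot2_dirDeriv_self_eq_zero (dT q) hU hunit hq _
  have hTW : dot2 (∂ₛ (∂ₛ (∂ₛ f)) q) (∂ₛ f q) = -dot2 (∂ₛ (∂ₛ f) q) (∂ₛ (∂ₛ f) q) := by
    have h := dirDeriv_eq_zero_of_eqOn_const ((dK q).dot2 (dT q)) hU hTK hq (1, 0)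
    rw [dirDeriv_dot2 (dK q) (dT q)] at h
    linarith
  have hddV : ∂ₛ (∂ₛ (normalSpeed f)) q = dot2 (∂ₛ (∂ₛ (∂ₜ f)) q) (rot2 (∂ₛ f q))
      + 2 * dot2 (∂ₛ (∂ₜ f) q) (rot2 (∂ₛ (∂ₛ f) q))
      + dot2 (∂ₜ f q) (rot2 (∂ₛ (∂ₛ (∂ₛ f)) q)) := by
    rw [dirDeriv_normalSpeed (hf.of_le (by norm_num)),
      dirDeriv_add ((dA q).dot2 (dT q).rot2) ((dV q).dot2 (dK q).rot2),
      dirDeriv_dot2 (dA q) (dT q).rot2, dirDeriv_rot2 (dT q),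
      dirDeriv_dot2 (dV q) (dK q).rot2, dirDeriv_rot2 (dK q)]
    ring
  rw [dirDeriv_curvature hf, dirDeriv_comm hT (0, 1) (1, 0), hschwarz, hddV,
    dirDeriv_curvature hf, dot2_rot2_self,
    dot2_rot2_eq_of_frame (∂ₜ f q) (hunit q hq) (hTK q hq) hTW,
    dot2_rot2_eq_zero_of_orthogonal (hunit q hq) (hTK q hq) hTA,
    dot2_rot2_eq_zero_of_orthogonal (hunit q hq) hTA (hTK q hq)]
  simp only [curvature, normalSpeed, tangentialSpeed]
  ring

end Curve

theorem stmt10 (S T : ℝ) (hS : 0 < S) (hT : 0 < T)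
    (X : ℝ → ℝ → ℝ × ℝ)
    (hX : ContDiff ℝ 3 (fun q : ℝ × ℝ => X q.1 q.2))
    (Tg Nv : ℝ → ℝ → ℝ × ℝ) (κ V v : ℝ → ℝ → ℝ)
    (hTg : ∀ s t, Tg s t = deriv (fun σ => X σ t) s)
    -- ‖∂ₛX‖ = 1 (arc-length parameterization)
    (hunit : ∀ s ∈ Set.Icc (0 : ℝ) S, ∀ t ∈ Set.Icc (0 : ℝ) T, dot2 (Tg s t) (Tg s t) = 1)
    (hNv : ∀ s t, Nv s t = rot2 (Tg s t))
    (hκ : ∀ s t, κ s t = dot2 (deriv (fun σ => Tg σ t) s) (Nv s t))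
    (hV : ∀ s t, V s t = dot2 (deriv (fun τ => X s τ) t) (Nv s t))
    (hv : ∀ s t, v s t = dot2 (deriv (fun τ => X s τ) t) (Tg s t)) :
    ∀ s ∈ Set.Icc (0 : ℝ) S, ∀ t ∈ Set.Icc (0 : ℝ) T,
      deriv (fun τ => κ s τ) t
        = deriv (fun σ => deriv (fun σ' => V σ' t) σ) s
          + (κ s t) ^ 2 * V s t + v s t * deriv (fun σ => κ σ t) s := by
  set f : ℝ × ℝ → ℝ × ℝ := fun q => X q.1 q.2
  have df : Differentiable ℝ f := hX.differentiable (by norm_num)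
  have dT : Differentiable ℝ (∂ₛ f) := (hX.dirDeriv (n := 2) _).differentiable (by norm_num)
  have dκ : Differentiable ℝ (curvature f) := (hX.curvature (n := 1)).differentiable one_ne_zero
  have hVf : ContDiff ℝ 2 (normalSpeed f) := hX.normalSpeed
  obtain rfl : Tg = fun s t => ∂ₛ f (s, t) :=
    funext₂ fun s t => (hTg s t).trans (deriv_slice_fst_eq_dirDeriv (df _))
  obtain rfl : Nv = fun s t => rot2 (∂ₛ f (s, t)) := funext₂ hNv
  obtain rfl : κ = fun s t => curvature f (s, t) :=
    funext₂ fun s t => by rw [hκ, deriv_slice_fst_eq_dirDeriv (dT _)]; rfl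
  obtain rfl : V = fun s t => normalSpeed f (s, t) :=
    funext₂ fun s t => by rw [hV, deriv_slice_snd_eq_dirDeriv (df _)]; rfl
  obtain rfl : v = fun s t => tangentialSpeed f (s, t) :=
    funext₂ fun s t => by rw [hv, deriv_slice_snd_eq_dirDeriv (df _)]; rfl
  intro s hs t ht
  have hdV : (fun σ => deriv (fun σ' => normalSpeed f (σ', t)) σ)
      = fun σ => ∂ₛ (normalSpeed f) (σ, t) :=
    funext fun σ => deriv_slice_fst_eq_dirDeriv ((hVf.differentiable two_ne_zero) _)
  have hU : UniqueDiffOn ℝ (Set.Icc 0 S ×ˢ Set.Icc 0 T) :=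
    (uniqueDiffOn_Icc hS).prod (uniqueDiffOn_Icc hT)
  simp only [hdV, deriv_slice_snd_eq_dirDeriv (dκ _), deriv_slice_fst_eq_dirDeriv (dκ _),
    deriv_slice_fst_eq_dirDeriv (((hVf.dirDeriv (n := 1) _).differentiable one_ne_zero) _)]
  exact curvature_evolution hX hU (fun p hp => hunit p.1 hp.1 p.2 hp.2) ⟨hs, ht⟩
end

section
/- Let X : [0,S] × [0,T] → ℝ² be a C¹ map with ‖∂_s X(s,t)‖ = 1 for all (s,t), define T = ∂_s X, N = R T, v = ⟨∂_t X, T⟩, and let ψ : ℝ² → ℝ be C¹. Let r : [0,T] → (0,S) be differentiable and suppose that for all t: ψ(X(r(t),t)) = 0, ⟨∇ψ(X(r(t),t)), N(r(t),t)⟩ = 0, and ⟨∇ψ(X(r(t),t)), T(r(t),t)⟩ ≠ 0. Then v(r(t),t) + r′(t) = 0 for all t. -/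
/-!
Differentiating `ψ (X (r t) t) = 0` in `t` gives `Dψ (r' ∂ₛX + ∂ₜX) = 0` at the endpoint.
Expanding `∂ₜX` in the orthonormal frame `(T, N)` and using `Dψ N = 0` leaves
`(r' + v) Dψ T = 0`, and `Dψ T ≠ 0`.
-/

lemma eq_dot2_smul_add_dot2_rot2_smul {a : ℝ × ℝ} (ha : dot2 a a = 1) (w : ℝ × ℝ) :
    w = dot2 w a • a + dot2 w (rot2 a) • rot2 a := by
  simp only [dot2, rot2] at ha ⊢
  ext
  · simp only [Prod.fst_add, Prod.smul_fst, smul_eq_mul]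
    linear_combination (-w.1) * ha
  · simp only [Prod.snd_add, Prod.smul_snd, smul_eq_mul]
    linear_combination (-w.2) * ha

lemma dot2_add_eq_zero_of_map_smul_add_eq_zero {M : Type*} [AddCommGroup M] [Module ℝ M]
    (L : ℝ × ℝ →ₗ[ℝ] M) {a : ℝ × ℝ} (ha : dot2 a a = 1) (hLrot : L (rot2 a) = 0)
    (hLa : L a ≠ 0) {c : ℝ} {w : ℝ × ℝ} (h : L (c • a + w) = 0) : dot2 w a + c = 0 := by
  have hLw : L w = dot2 w a • L a := by
    conv_lhs => rw [eq_dot2_smul_add_dot2_rot2_smul ha w]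
    rw [map_add, map_smul, map_smul, hLrot, smul_zero, add_zero]
  rw [map_add, map_smul, hLw, ← add_smul, add_comm] at h
  exact (smul_eq_zero.mp h).resolve_right hLa

section Slices

variable {E : Type*} [NormedAddCommGroup E] [NormedSpace ℝ E]
  {F : ℝ × ℝ → E} {F' : ℝ × ℝ →L[ℝ] E} {x y : ℝ}

lemma HasFDerivAt.hasDerivAt_slice_fst (hF : HasFDerivAt F F' (x, y)) :
    HasDerivAt (fun σ => F (σ, y)) (F' (1, 0)) x :=
  hF.comp_hasDerivAt x ((hasDerivAt_id x).prodMk (hasDerivAt_const x y))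

lemma HasFDerivAt.hasDerivAt_slice_snd (hF : HasFDerivAt F F' (x, y)) :
    HasDerivAt (fun τ => F (x, τ)) (F' (0, 1)) y :=
  hF.comp_hasDerivAt y ((hasDerivAt_const y x).prodMk (hasDerivAt_id y))

lemma HasFDerivAt.hasDerivAt_comp_graph {r : ℝ → ℝ} {r' t : ℝ}
    (hF : HasFDerivAt F F' (r t, t)) (hr : HasDerivAt r r' t) :
    HasDerivAt (fun τ => F (r τ, τ)) (r' • F' (1, 0) + F' (0, 1)) t := by
  have h := hF.comp_hasDerivAt_of_eq t (hr.prodMk (hasDerivAt_id t)) rfl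
  rwa [show ((r', 1) : ℝ × ℝ) = r' • (1, 0) + (0, 1) by simp, map_add, map_smul] at h

end Slices

lemma HasDerivAt.eq_zero_of_eqOn_Icc {f : ℝ → ℝ} {f' a b t : ℝ} (hab : a < b)
    (ht : t ∈ Set.Icc a b) (hf : HasDerivAt f f' t) (hzero : ∀ τ ∈ Set.Icc a b, f τ = 0) :
    f' = 0 :=
  (uniqueDiffOn_Icc hab t ht).eq_deriv _ hf.hasDerivWithinAt
    ((hasDerivWithinAt_const t _ 0).congr hzero (hzero t ht))

theorem stmt11_general (S T : ℝ) (hT : 0 < T)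
    (X : ℝ → ℝ → ℝ × ℝ)
    (hX : ContDiff ℝ 1 (fun q : ℝ × ℝ => X q.1 q.2))
    (Tg Nv : ℝ → ℝ → ℝ × ℝ) (v : ℝ → ℝ → ℝ)
    (hTg : ∀ s t, Tg s t = deriv (fun σ => X σ t) s)
    -- ‖∂ₛX‖ = 1 (arc-length parameterization)
    (hunit : ∀ s ∈ Set.Icc (0 : ℝ) S, ∀ t ∈ Set.Icc (0 : ℝ) T, dot2 (Tg s t) (Tg s t) = 1)
    (hNv : ∀ s t, Nv s t = rot2 (Tg s t))
    (hv : ∀ s t, v s t = dot2 (deriv (fun τ => X s τ) t) (Tg s t))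
    (ψ : ℝ × ℝ → ℝ) (hψ : ContDiff ℝ 1 ψ)
    (r r' : ℝ → ℝ)
    (hr : ∀ t ∈ Set.Icc (0 : ℝ) T, HasDerivAt r (r' t) t)
    (hrange : ∀ t ∈ Set.Icc (0 : ℝ) T, r t ∈ Set.Ioo 0 S)
    -- the endpoint lies on {ψ = 0}
    (hon : ∀ t ∈ Set.Icc (0 : ℝ) T, ψ (X (r t) t) = 0)
    -- ⟨∇ψ, N⟩ = 0 and ⟨∇ψ, T⟩ ≠ 0 at the endpoint
    (hperp : ∀ t ∈ Set.Icc (0 : ℝ) T, fderiv ℝ ψ (X (r t) t) (Nv (r t) t) = 0)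
    (hnond : ∀ t ∈ Set.Icc (0 : ℝ) T, fderiv ℝ ψ (X (r t) t) (Tg (r t) t) ≠ 0) :
    ∀ t ∈ Set.Icc (0 : ℝ) T, v (r t) t + r' t = 0 := by
  intro t ht
  have hX' := (hX.differentiable one_ne_zero (r t, t)).hasFDerivAt
  set DX := fderiv ℝ (fun q : ℝ × ℝ => X q.1 q.2) (r t, t)
  set L := fderiv ℝ ψ (X (r t) t)
  have hTg' : Tg (r t) t = DX (1, 0) := by rw [hTg]; exact hX'.hasDerivAt_slice_fst.deriv
  have hdtX : deriv (fun τ => X (r t) τ) t = DX (0, 1) := hX'.hasDerivAt_slice_snd.deriv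
  have hψX : HasDerivAt (fun τ => ψ (X (r τ) τ)) (L (r' t • DX (1, 0) + DX (0, 1))) t :=
    (hψ.differentiable one_ne_zero _).hasFDerivAt.comp_hasDerivAt t
      (hX'.hasDerivAt_comp_graph (hr t ht))
  rw [hv, hdtX, hTg']
  refine dot2_add_eq_zero_of_map_smul_add_eq_zero (L : ℝ × ℝ →ₗ[ℝ] ℝ) ?_ ?_ ?_
    (hψX.eq_zero_of_eqOn_Icc hT ht hon)
  · rw [← hTg']
    exact hunit _ (Set.Ioo_subset_Icc_self (hrange t ht)) t ht
  · rw [← hTg', ← hNv]; exact hperp t ht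
  · rw [← hTg']; exact hnond t ht

theorem stmt11 (S T : ℝ) (hS : 0 < S) (hT : 0 < T)
    (X : ℝ → ℝ → ℝ × ℝ)
    (hX : ContDiff ℝ 1 (fun q : ℝ × ℝ => X q.1 q.2))
    (Tg Nv : ℝ → ℝ → ℝ × ℝ) (v : ℝ → ℝ → ℝ)
    (hTg : ∀ s t, Tg s t = deriv (fun σ => X σ t) s)
    -- ‖∂ₛX‖ = 1 (arc-length parameterization)
    (hunit : ∀ s ∈ Set.Icc (0 : ℝ) S, ∀ t ∈ Set.Icc (0 : ℝ) T, dot2 (Tg s t) (Tg s t) = 1)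
    (hNv : ∀ s t, Nv s t = rot2 (Tg s t))
    (hv : ∀ s t, v s t = dot2 (deriv (fun τ => X s τ) t) (Tg s t))
    (ψ : ℝ × ℝ → ℝ) (hψ : ContDiff ℝ 1 ψ)
    (r r' : ℝ → ℝ)
    (hr : ∀ t ∈ Set.Icc (0 : ℝ) T, HasDerivAt r (r' t) t)
    (hrange : ∀ t ∈ Set.Icc (0 : ℝ) T, r t ∈ Set.Ioo 0 S)
    -- the endpoint lies on {ψ = 0}
    (hon : ∀ t ∈ Set.Icc (0 : ℝ) T, ψ (X (r t) t) = 0)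
    -- ⟨∇ψ, N⟩ = 0 and ⟨∇ψ, T⟩ ≠ 0 at the endpoint
    (hperp : ∀ t ∈ Set.Icc (0 : ℝ) T, fderiv ℝ ψ (X (r t) t) (Nv (r t) t) = 0)
    (hnond : ∀ t ∈ Set.Icc (0 : ℝ) T, fderiv ℝ ψ (X (r t) t) (Tg (r t) t) ≠ 0) :
    ∀ t ∈ Set.Icc (0 : ℝ) T, v (r t) t + r' t = 0 :=
  stmt11_general S T hT X hX Tg Nv v hTg hunit hNv hv ψ hψ r r' hr hrange hon hperp hnond
end

section
/- Let γ¹,γ²,γ³ > 0, S, T > 0, let rⁱ : [0,T] → (0,S) be C¹, and let κⁱ, vⁱ : [0,S] × [0,T] → ℝ be C¹ functions (i = 1,2,3) satisfying: ∂_s vⁱ = (κⁱ)² on [0,S] × [0,T]; vⁱ(rⁱ(t),t) = −(rⁱ)′(t) for all t; and Σᵢ₌₁³ γⁱ vⁱ(0,t) = 0 for all t. Then d/dt [ Σᵢ₌₁³ γⁱ rⁱ(t) ] = − Σᵢ₌₁³ γⁱ ∫₀^{rⁱ(t)} κⁱ(s,t)² ds for all t. -/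
/-!
Integrating `∂ₛvⁱ = (κⁱ)²` along the `i`-th curve and using the contact condition at the outer
boundary gives `∫₀^{rⁱ(t)} (κⁱ)² ds = -(rⁱ)'(t) - vⁱ(0,t)`. Weighting by `γⁱ` and summing, the
junction terms `Σ γⁱ vⁱ(0,t)` cancel by Young's law.
-/

open Set

theorem integral_eq_sub_of_deriv_eqOn {f g : ℝ → ℝ} {a b : ℝ} (hab : a ≤ b)
    (hf : Differentiable ℝ f) (hg : Continuous g) (hfg : ∀ s ∈ Icc a b, deriv f s = g s) :
    ∫ s in a..b, g s = f b - f a :=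
  intervalIntegral.integral_eq_sub_of_hasDerivAt
    (fun s hs => hfg s (uIcc_of_le hab ▸ hs) ▸ (hf s).hasDerivAt)
    (hg.intervalIntegrable a b)

theorem stmt14_general (γ : Fin 3 → ℝ) (S T : ℝ)
    (r : Fin 3 → ℝ → ℝ) (hr : ∀ i, ContDiff ℝ 1 (r i))
    (hrange : ∀ i, ∀ t ∈ Set.Icc (0 : ℝ) T, r i t ∈ Set.Ioo 0 S)
    (κ v : Fin 3 → ℝ → ℝ → ℝ)
    (hκ : ∀ i, ContDiff ℝ 1 (fun q : ℝ × ℝ => κ i q.1 q.2))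
    (hv : ∀ i, ContDiff ℝ 1 (fun q : ℝ × ℝ => v i q.1 q.2))
    -- ∂ₛvⁱ = (κⁱ)²
    (hvs : ∀ i, ∀ s ∈ Set.Icc (0 : ℝ) S, ∀ t ∈ Set.Icc (0 : ℝ) T,
      deriv (fun σ => v i σ t) s = (κ i s t) ^ 2)
    -- perpendicular contact with the outer boundary
    (hbc : ∀ i, ∀ t ∈ Set.Icc (0 : ℝ) T, v i (r i t) t = -(deriv (r i) t))
    -- Young's law at the triple junction
    (hjunc : ∀ t ∈ Set.Icc (0 : ℝ) T, ∑ i, γ i * v i 0 t = 0) :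
    ∀ t ∈ Set.Icc (0 : ℝ) T,
      HasDerivAt (fun τ => ∑ i, γ i * r i τ)
        (-∑ i, γ i * ∫ s in (0 : ℝ)..(r i t), (κ i s t) ^ 2) t := by
  intro t ht
  have integral_curvature_sq : ∀ i, ∫ s in (0 : ℝ)..(r i t), (κ i s t) ^ 2
      = -deriv (r i) t - v i 0 t := by
    intro i
    obtain ⟨hr₀, hrS⟩ := hrange i t ht
    rw [integral_eq_sub_of_deriv_eqOn (f := fun σ => v i σ t) (g := fun s => κ i s t ^ 2) hr₀.le
      (((hv i).comp (contDiff_prodMk_left t)).differentiable one_ne_zero)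
      (((hκ i).comp (contDiff_prodMk_left t)).continuous.pow 2)
      (fun s hs => hvs i s ⟨hs.1, hs.2.trans hrS.le⟩ t ht)]
    exact congrArg (· - v i 0 t) (hbc i t ht)
  have hasDerivAt_length : HasDerivAt (fun τ => ∑ i, γ i * r i τ) (∑ i, γ i * deriv (r i) t) t :=
    HasDerivAt.fun_sum fun i _ =>
      (((hr i).differentiable one_ne_zero) t).hasDerivAt.const_mul (γ i)
  convert hasDerivAt_length using 1
  simp only [integral_curvature_sq, mul_sub, mul_neg, Finset.sum_sub_distrib, Finset.sum_neg_distrib,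
    hjunc t ht, sub_zero, neg_neg]

theorem stmt14 (γ : Fin 3 → ℝ) (hγ : ∀ i, 0 < γ i) (S T : ℝ) (hS : 0 < S) (hT : 0 < T)
    (r : Fin 3 → ℝ → ℝ) (hr : ∀ i, ContDiff ℝ 1 (r i))
    (hrange : ∀ i, ∀ t ∈ Set.Icc (0 : ℝ) T, r i t ∈ Set.Ioo 0 S)
    (κ v : Fin 3 → ℝ → ℝ → ℝ)
    (hκ : ∀ i, ContDiff ℝ 1 (fun q : ℝ × ℝ => κ i q.1 q.2))
    (hv : ∀ i, ContDiff ℝ 1 (fun q : ℝ × ℝ => v i q.1 q.2))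
    -- ∂ₛvⁱ = (κⁱ)²
    (hvs : ∀ i, ∀ s ∈ Set.Icc (0 : ℝ) S, ∀ t ∈ Set.Icc (0 : ℝ) T,
      deriv (fun σ => v i σ t) s = (κ i s t) ^ 2)
    -- perpendicular contact with the outer boundary
    (hbc : ∀ i, ∀ t ∈ Set.Icc (0 : ℝ) T, v i (r i t) t = -(deriv (r i) t))
    -- Young's law at the triple junction
    (hjunc : ∀ t ∈ Set.Icc (0 : ℝ) T, ∑ i, γ i * v i 0 t = 0) :
    ∀ t ∈ Set.Icc (0 : ℝ) T,
      HasDerivAt (fun τ => ∑ i, γ i * r i τ)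
        (-∑ i, γ i * ∫ s in (0 : ℝ)..(r i t), (κ i s t) ^ 2) t :=
  stmt14_general γ S T r hr hrange κ v hκ hv hvs hbc hjunc
end

section
/- Let L > 0 and let f : [0,L] → ℝ be C¹. Then ∫₀ᴸ f(s)⁴ ds ≤ 2 ( L ∫₀ᴸ f′(s)² ds + (1/L) ∫₀ᴸ f(s)² ds ) · ∫₀ᴸ f(s)² ds. -/
/-!
Write `M = L ∫ f'² + (1/L) ∫ f²`. Since `(f²)' = 2 f f'` and `2 |f f'| ≤ L f'² + f² / L`, the total
variation of `f²` on `[0, L]` is at most `M`. Averaging `f(s)² ≤ f(t)² + M` over `t` gives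
`f(s)² ≤ (1/L) ∫ f² + M ≤ 2 M`, and `∫ f⁴ ≤ sup f² · ∫ f²`.
-/

open Set Filter Topology MeasureTheory intervalIntegral

section Variation

variable {g g' : ℝ → ℝ} {a b : ℝ}

theorem sub_le_integral_abs_deriv
    (hg : ∀ x ∈ Icc a b, HasDerivWithinAt g (g' x) (Icc a b) x)
    (hg' : IntervalIntegrable g' volume a b) {s t : ℝ} (hs : s ∈ Icc a b) (ht : t ∈ Icc a b) :
    g s - g t ≤ ∫ x in a..b, |g' x| := by
  have hab : a ≤ b := hs.1.trans hs.2
  have hsub : uIcc t s ⊆ Icc a b := uIcc_subset_Icc ht hs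
  have hftc : ∫ x in t..s, g' x = g s - g t := by
    refine integral_eq_sub_of_hasDeriv_right
      (fun x hx => (hg x (hsub hx)).continuousWithinAt.mono hsub) (fun x hx => ?_)
      (hg'.mono_set (by rwa [uIcc_of_le hab]))
    have hnhds : Icc a b ∈ 𝓝 x :=
      mem_of_superset (Ioo_mem_nhds hx.1 hx.2) (Ioo_subset_Icc_self.trans hsub)
    exact ((hg x (mem_of_mem_nhds hnhds)).hasDerivAt hnhds).hasDerivWithinAt
  calc g s - g t = ∫ x in t..s, g' x := hftc.symm
    _ ≤ |∫ x in t..s, g' x| := le_abs_self _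
    _ ≤ ∫ x in uIoc t s, |g' x| := by
        simpa only [Real.norm_eq_abs] using
          norm_integral_le_integral_norm_uIoc (f := g') (μ := volume)
    _ ≤ ∫ x in Ioc a b, |g' x| :=
        setIntegral_mono_set ((intervalIntegrable_iff_integrableOn_Ioc_of_le hab).1 hg'.abs)
          (Eventually.of_forall fun _ => abs_nonneg _)
          (Eventually.of_forall (Ioc_subset_Ioc (le_min ht.1 hs.1) (max_le ht.2 hs.2)))
    _ = ∫ x in a..b, |g' x| := (integral_of_le hab).symm

theorem le_mean_add_integral_abs_deriv (hab : a < b)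
    (hg : ∀ x ∈ Icc a b, HasDerivWithinAt g (g' x) (Icc a b) x)
    (hg' : IntervalIntegrable g' volume a b) {s : ℝ} (hs : s ∈ Icc a b) :
    g s ≤ (b - a)⁻¹ * (∫ x in a..b, g x) + ∫ x in a..b, |g' x| := by
  have hgint : IntervalIntegrable g volume a b :=
    ContinuousOn.intervalIntegrable_of_Icc hab.le fun x hx => (hg x hx).continuousWithinAt
  have hmean : (b - a) * g s ≤ (∫ x in a..b, g x) + (b - a) * ∫ x in a..b, |g' x| := by
    simpa using integral_mono_on hab.le intervalIntegrable_const hgint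
      fun t ht => sub_le_comm.1 (sub_le_integral_abs_deriv hg hg' hs ht)
  have hba : 0 < b - a := sub_pos.2 hab
  rw [inv_mul_eq_div, div_add' _ _ _ hba.ne', le_div_iff₀ hba]
  linarith

end Variation

theorem two_mul_abs_mul_le {c : ℝ} (hc : 0 < c) (x y : ℝ) :
    2 * |x * y| ≤ c * y ^ 2 + c⁻¹ * x ^ 2 := by
  have hsq : c * y ^ 2 + c⁻¹ * x ^ 2 - 2 * (|x| * |y|) = c⁻¹ * (|x| - c * |y|) ^ 2 := by
    rw [← sq_abs x, ← sq_abs y]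
    field_simp
    ring
  rw [abs_mul, ← sub_nonneg, hsq]
  positivity

theorem integral_abs_two_mul_mul_le {f f' : ℝ → ℝ} {a b c : ℝ} (hab : a ≤ b) (hc : 0 < c)
    (hf : ContinuousOn f (Icc a b)) (hf' : ContinuousOn f' (Icc a b)) :
    ∫ x in a..b, |2 * f x * f' x| ≤
      c * (∫ x in a..b, f' x ^ 2) + c⁻¹ * ∫ x in a..b, f x ^ 2 := by
  have hint' : IntervalIntegrable (fun x => c * f' x ^ 2) volume a b :=
    ((hf'.pow 2).intervalIntegrable_of_Icc hab).const_mul c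
  have hint : IntervalIntegrable (fun x => c⁻¹ * f x ^ 2) volume a b :=
    ((hf.pow 2).intervalIntegrable_of_Icc hab).const_mul c⁻¹
  rw [← intervalIntegral.integral_const_mul, ← intervalIntegral.integral_const_mul,
    ← integral_add hint' hint]
  refine integral_mono_on hab
    (((continuousOn_const.mul hf).mul hf').abs.intervalIntegrable_of_Icc hab) (hint'.add hint)
    fun x _ => ?_
  simpa only [mul_assoc, abs_mul, abs_two] using two_mul_abs_mul_le hc (f x) (f' x)

theorem stmt16 (L : ℝ) (hL : 0 < L) (f f' : ℝ → ℝ)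
    -- f is C¹ on [0, L] with derivative f'
    (hf : ∀ s ∈ Set.Icc (0 : ℝ) L, HasDerivWithinAt f (f' s) (Set.Icc 0 L) s)
    (hf' : ContinuousOn f' (Set.Icc 0 L)) :
    (∫ u in (0 : ℝ)..L, (f u) ^ 4)
      ≤ 2 * (L * (∫ u in (0 : ℝ)..L, (f' u) ^ 2) + (1 / L) * ∫ u in (0 : ℝ)..L, (f u) ^ 2)
          * ∫ u in (0 : ℝ)..L, (f u) ^ 2 := by
  set A := ∫ u in (0 : ℝ)..L, f' u ^ 2
  set B := ∫ u in (0 : ℝ)..L, f u ^ 2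
  have hfc : ContinuousOn f (Icc 0 L) := fun s hs => (hf s hs).continuousWithinAt
  have hsq : ∀ s ∈ Icc (0 : ℝ) L,
      HasDerivWithinAt (fun u => f u ^ 2) (2 * f s * f' s) (Icc 0 L) s := fun s hs => by
    simpa using (hf s hs).fun_pow 2
  have hA : 0 ≤ L * A := mul_nonneg hL.le (integral_nonneg hL.le fun u _ => sq_nonneg _)
  have hsup : ∀ s ∈ Icc (0 : ℝ) L, f s ^ 2 ≤ 2 * (L * A + 1 / L * B) := fun s hs =>
    calc f s ^ 2 ≤ (L - 0)⁻¹ * B + ∫ u in (0 : ℝ)..L, |2 * f u * f' u| :=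
          le_mean_add_integral_abs_deriv hL hsq
            (((continuousOn_const.mul hfc).mul hf').intervalIntegrable_of_Icc hL.le) hs
      _ ≤ L⁻¹ * B + (L * A + L⁻¹ * B) := by
          rw [sub_zero]
          gcongr
          exact integral_abs_two_mul_mul_le hL.le hL hfc hf'
      _ ≤ 2 * (L * A + 1 / L * B) := by rw [one_div]; linarith
  calc ∫ u in (0 : ℝ)..L, f u ^ 4 ≤ ∫ u in (0 : ℝ)..L, 2 * (L * A + 1 / L * B) * f u ^ 2 :=
        integral_mono_on hL.le ((hfc.pow 4).intervalIntegrable_of_Icc hL.le)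
          (((hfc.pow 2).intervalIntegrable_of_Icc hL.le).const_mul _) fun u hu => by
            rw [show f u ^ 4 = f u ^ 2 * f u ^ 2 by ring]
            exact mul_le_mul_of_nonneg_right (hsup u hu) (sq_nonneg _)
    _ = 2 * (L * A + 1 / L * B) * B := intervalIntegral.integral_const_mul _ _
end

section
/- Let L > 0 and let f : [0,L] → ℝ be C¹. Then |f(0)|³ ≤ (9 L^{1/2} + 3/2) · ‖f‖_{L²} ‖f′‖_{L²}² + ( 3/(2L) + L^{−3/2} ) · ‖f‖_{L²}³, where ‖g‖_{L²} = (∫₀ᴸ g(s)² ds)^{1/2}. -/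
/-!
Write `X = ‖f‖_{L²}` and `Y = ‖f'‖_{L²}`. By the fundamental theorem of calculus applied to `f²`,
`f(0)² ≤ f(s)² + ∫₀ᴸ |2 f f'|` for every `s ∈ [0, L]`, and by Cauchy–Schwarz the last integral is at
most `2XY`. Averaging over `s` gives `f(0)² ≤ X²/L + 2XY`; cubing this is then a polynomial
inequality in `X`, `Y` and `√L`, certified by writing the difference as squares times powers
of `√L`.
-/

open MeasureTheory Set intervalIntegral

theorem le_add_integral_abs_deriv {g g' : ℝ → ℝ} {a b s : ℝ}
    (hg : ∀ x ∈ Icc a b, HasDerivWithinAt g (g' x) (Icc a b) x)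
    (hg' : ContinuousOn g' (Icc a b)) (hs : s ∈ Icc a b) :
    g a ≤ g s + ∫ x in a..b, |g' x| := by
  have hsub : Icc a s ⊆ Icc a b := Icc_subset_Icc_right hs.2
  have hftc : ∫ x in a..s, g' x = g s - g a := by
    refine integral_eq_sub_of_hasDeriv_right_of_le hs.1
      (fun x hx => ((hg x (hsub hx)).continuousWithinAt).mono hsub) (fun x hx => ?_)
      ((hg'.mono hsub).intervalIntegrable_of_Icc hs.1)
    exact (hg x (hsub (Ioo_subset_Icc_self hx))).mono_of_mem_nhdsWithin
      (Icc_mem_nhdsGT_of_mem ⟨hx.1.le, hx.2.trans_le hs.2⟩)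
  calc g a = g s - ∫ x in a..s, g' x := by linarith
    _ ≤ g s + |∫ x in a..s, g' x| := by linarith [neg_abs_le (∫ x in a..s, g' x)]
    _ ≤ g s + ∫ x in a..s, |g' x| := by gcongr; exact abs_integral_le_integral_abs hs.1
    _ ≤ g s + ∫ x in a..b, |g' x| := by
      gcongr
      exact integral_mono_interval le_rfl hs.1 hs.2 (ae_of_all _ fun _ => abs_nonneg _)
        (hg'.abs.intervalIntegrable_of_Icc (hs.1.trans hs.2))

theorem mul_le_integral_of_forall_le {g : ℝ → ℝ} {a b c : ℝ} (hab : a ≤ b)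
    (hg : IntervalIntegrable g volume a b) (h : ∀ x ∈ Icc a b, c ≤ g x) :
    (b - a) * c ≤ ∫ x in a..b, g x := by
  simpa using integral_mono_on hab intervalIntegrable_const hg h

theorem sq_integral_mul_le_integral_sq_mul_integral_sq {g h : ℝ → ℝ} {a b : ℝ} (hab : a ≤ b)
    (hg : ContinuousOn g (Icc a b)) (hh : ContinuousOn h (Icc a b)) :
    (∫ x in a..b, g x * h x) ^ 2 ≤ (∫ x in a..b, g x ^ 2) * ∫ x in a..b, h x ^ 2 := by
  have hquad : ∀ t : ℝ, 0 ≤ (∫ x in a..b, g x ^ 2) * (t * t)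
      + (2 * ∫ x in a..b, g x * h x) * t + ∫ x in a..b, h x ^ 2 := by
    intro t
    calc 0 ≤ ∫ x in a..b, (t * g x + h x) ^ 2 := integral_nonneg hab fun _ _ => sq_nonneg _
      _ = ∫ x in a..b, ((t * t) * g x ^ 2 + (2 * t) * (g x * h x) + h x ^ 2) := by
        congr 1; ext x; ring
      _ = _ := by
        rw [intervalIntegral.integral_add, intervalIntegral.integral_add,
          intervalIntegral.integral_const_mul, intervalIntegral.integral_const_mul]
        · ring
        all_goals exact ContinuousOn.intervalIntegrable_of_Icc hab (by fun_prop)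
  have := discrim_le_zero hquad
  rw [discrim] at this
  linarith

theorem sq_le_integral_sq_div_add {f f' : ℝ → ℝ} {a b : ℝ} (hab : a < b)
    (hf : ∀ s ∈ Icc a b, HasDerivWithinAt f (f' s) (Icc a b) s)
    (hf' : ContinuousOn f' (Icc a b)) :
    f a ^ 2 ≤ (∫ u in a..b, f u ^ 2) / (b - a) + 2 * ∫ u in a..b, |f u| * |f' u| := by
  have hfc : ContinuousOn f (Icc a b) := fun s hs => (hf s hs).continuousWithinAt
  have hsq : ∀ s ∈ Icc a b, HasDerivWithinAt (fun u => f u ^ 2) (2 * (f s * f' s)) (Icc a b) s :=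
    fun s hs => ((hf s hs).fun_pow 2).congr_deriv (by ring)
  have hpointwise : ∀ s ∈ Icc a b, f a ^ 2 ≤ f s ^ 2 + 2 * ∫ u in a..b, |f u| * |f' u| :=
    fun s hs => by
      simpa only [abs_mul, abs_two, intervalIntegral.integral_const_mul]
        using le_add_integral_abs_deriv hsq (by fun_prop) hs
  have hf2 : IntervalIntegrable (fun u => f u ^ 2) volume a b :=
    (hfc.pow 2).intervalIntegrable_of_Icc hab.le
  have haverage := mul_le_integral_of_forall_le hab.le (hf2.add intervalIntegrable_const) hpointwise
  rw [intervalIntegral.integral_add hf2 intervalIntegrable_const,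
    intervalIntegral.integral_const, smul_eq_mul] at haverage
  rw [div_add' _ _ _ (sub_pos.2 hab).ne', le_div_iff₀ (sub_pos.2 hab)]
  linarith

theorem integral_abs_mul_abs_le_sqrt_mul_sqrt {g h : ℝ → ℝ} {a b : ℝ} (hab : a ≤ b)
    (hg : ContinuousOn g (Icc a b)) (hh : ContinuousOn h (Icc a b)) :
    ∫ x in a..b, |g x| * |h x| ≤ √(∫ x in a..b, g x ^ 2) * √(∫ x in a..b, h x ^ 2) := by
  rw [← Real.sqrt_mul (integral_nonneg hab fun _ _ => sq_nonneg _)]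
  refine Real.le_sqrt_of_sq_le ?_
  simpa only [sq_abs] using sq_integral_mul_le_integral_sq_mul_integral_sq hab hg.abs hh.abs

theorem sq_add_mul_pow_three_le {X Y l : ℝ} (hl : 0 ≤ l) :
    (X ^ 2 + 2 * X * Y * l ^ 2) ^ 3
      ≤ (X ^ 3 + 3 / 2 * X ^ 3 * l + 3 / 2 * X * Y ^ 2 * l ^ 3 + 9 * X * Y ^ 2 * l ^ 4) ^ 2 := by
  rw [← sub_nonneg]
  have hsos : (X ^ 3 + 3 / 2 * X ^ 3 * l + 3 / 2 * X * Y ^ 2 * l ^ 3 + 9 * X * Y ^ 2 * l ^ 4) ^ 2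
        - (X ^ 2 + 2 * X * Y * l ^ 2) ^ 3
      = 3 * X ^ 4 * l * (X - Y * l) ^ 2 + X ^ 2 * Y ^ 2 * l ^ 5 * (X - 4 * Y * l) ^ 2
        + 9 / 4 * X ^ 6 * l ^ 2 + 21 / 2 * X ^ 4 * Y ^ 2 * l ^ 4 + 26 * X ^ 4 * Y ^ 2 * l ^ 5
        + 9 / 4 * X ^ 2 * Y ^ 4 * l ^ 6 + 11 * X ^ 2 * Y ^ 4 * l ^ 7
        + 81 * X ^ 2 * Y ^ 4 * l ^ 8 := by
    ring
  rw [hsos]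
  positivity

theorem abs_pow_three_le_of_sq_le {a X Y L : ℝ} (hX : 0 ≤ X) (hL : 0 < L)
    (ha : a ^ 2 ≤ X ^ 2 / L + 2 * X * Y) :
    |a| ^ 3 ≤ (9 * √L + 3 / 2) * X * Y ^ 2 + (3 / (2 * L) + 1 / (L * √L)) * X ^ 3 := by
  obtain ⟨l, hl, rfl⟩ : ∃ l, 0 < l ∧ L = l ^ 2 :=
    ⟨√L, Real.sqrt_pos.2 hL, (Real.sq_sqrt hL.le).symm⟩
  rw [Real.sqrt_sq hl.le]
  set P := X ^ 3 + 3 / 2 * X ^ 3 * l + 3 / 2 * X * Y ^ 2 * l ^ 3 + 9 * X * Y ^ 2 * l ^ 4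
  have hP : (9 * l + 3 / 2) * X * Y ^ 2 + (3 / (2 * l ^ 2) + 1 / (l ^ 2 * l)) * X ^ 3
      = P / l ^ 3 := by
    field_simp
    ring
  rw [hP, ← pow_le_pow_iff_left₀ (by positivity) (by positivity) two_ne_zero]
  calc (|a| ^ 3) ^ 2 = (a ^ 2) ^ 3 := by rw [← sq_abs a]; ring
    _ ≤ (X ^ 2 / l ^ 2 + 2 * X * Y) ^ 3 := by gcongr
    _ = (X ^ 2 + 2 * X * Y * l ^ 2) ^ 3 / (l ^ 3) ^ 2 := by field_simp
    _ ≤ P ^ 2 / (l ^ 3) ^ 2 := by gcongr; exact sq_add_mul_pow_three_le hl.le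
    _ = (P / l ^ 3) ^ 2 := (div_pow P _ 2).symm

theorem stmt17 (L : ℝ) (hL : 0 < L) (f f' : ℝ → ℝ)
    -- f is C¹ on [0, L] with derivative f'
    (hf : ∀ s ∈ Set.Icc (0 : ℝ) L, HasDerivWithinAt f (f' s) (Set.Icc 0 L) s)
    (hf' : ContinuousOn f' (Set.Icc 0 L)) :
    |f 0| ^ 3
      ≤ (9 * Real.sqrt L + 3 / 2)
            * Real.sqrt (∫ u in (0 : ℝ)..L, (f u) ^ 2) * (∫ u in (0 : ℝ)..L, (f' u) ^ 2)
        + (3 / (2 * L) + 1 / (L * Real.sqrt L))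
            * Real.sqrt (∫ u in (0 : ℝ)..L, (f u) ^ 2) ^ 3 := by
  set I := ∫ u in (0 : ℝ)..L, f u ^ 2
  set J := ∫ u in (0 : ℝ)..L, f' u ^ 2
  have hI0 : 0 ≤ I := integral_nonneg hL.le fun _ _ => sq_nonneg _
  have hJ0 : 0 ≤ J := integral_nonneg hL.le fun _ _ => sq_nonneg _
  have hmean := sq_le_integral_sq_div_add hL hf hf'
  have hcs := integral_abs_mul_abs_le_sqrt_mul_sqrt hL.le
    (fun s hs => (hf s hs).continuousWithinAt) hf'
  have hf0 : f 0 ^ 2 ≤ √I ^ 2 / L + 2 * √I * √J := by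
    rw [sub_zero] at hmean
    rw [Real.sq_sqrt hI0]
    linarith
  have := abs_pow_three_le_of_sq_le (Real.sqrt_nonneg I) hL hf0
  rwa [Real.sq_sqrt hJ0] at this
end
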